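/- arXiv:2004.02152 — 16 statements merged into one kernel-verified Lean document; each statement's English description precedes it below -/
import Mathlib

section
/- Let (f_n)_{n∈ℤ} be a frame of H with lower bound A and upper bound B, and suppose there is T ∈ GL(H) such that f_n = Tⁿ f_0 for all n ∈ ℤ. Then for every n ∈ ℤ and every x ∈ H one has √(A/B)·‖x‖ ≤ ‖Tⁿ x‖ ≤ √(B/A)·‖x‖ and √(A/B)·‖x‖ ≤ ‖(T*)ⁿ x‖ ≤ √(B/A)·‖x‖; in particular 1 ≤ ‖Tⁿ‖ ≤ √(B/A) for every n ∈ ℤ. -/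
/-!
Since `f (n + m) = Tⁿ (f m)`, the frame coefficients of `(Tⁿ)* x` are those of `x` shifted by
`n`, so `x` and `(Tⁿ)* x` have the same frame sum. The frame bounds then give
`A ‖(Tⁿ)* x‖² ≤ B ‖x‖²` and `A ‖x‖² ≤ B ‖(Tⁿ)* x‖²`, which bound `‖Tⁿ‖ = ‖(Tⁿ)*‖` by `√(B/A)`
for every `n`; applied to `T⁻ⁿ` this bounds `Tⁿ` from below by `√(A/B)`. Finally, if `‖Tⁿ‖ < 1`
then `‖T^(nk)‖ ≤ ‖Tⁿ‖ᵏ` would eventually drop below the uniform lower bound `√(A/B)`.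
-/

noncomputable section

open scoped InnerProductSpace

def IsFrame {H : Type} [NormedAddCommGroup H] [InnerProductSpace ℂ H] {I : Type}
    (f : I → H) (A B : ℝ) : Prop :=
  0 < A ∧ 0 < B ∧ ∀ x : H,
    Summable (fun n : I => ‖(inner ℂ x (f n) : ℂ)‖ ^ 2) ∧
    A * ‖x‖ ^ 2 ≤ ∑' n : I, ‖(inner ℂ x (f n) : ℂ)‖ ^ 2 ∧
    ∑' n : I, ‖(inner ℂ x (f n) : ℂ)‖ ^ 2 ≤ B * ‖x‖ ^ 2

lemma Real.sqrt_div_mul_le_of_le_sqrt_div_mul {a b u v : ℝ} (ha : 0 < a) (hb : 0 < b)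
    (h : u ≤ √(b / a) * v) : √(a / b) * u ≤ v := by
  rwa [← inv_div, Real.sqrt_inv, inv_mul_le_iff₀ (by positivity)]

namespace ContinuousLinearEquiv

variable {𝕜 E : Type*} [NontriviallyNormedField 𝕜] [NormedAddCommGroup E] [NormedSpace 𝕜 E]

lemma norm_pow_apply_le (S : E ≃L[𝕜] E) (k : ℕ) (x : E) :
    ‖(S ^ k) x‖ ≤ ‖(S : E →L[𝕜] E)‖ ^ k * ‖x‖ := by
  induction k with
  | zero => rw [pow_zero, pow_zero, one_mul]; exact le_rfl
  | succ k ih =>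
    calc ‖(S ^ (k + 1)) x‖ = ‖(S : E →L[𝕜] E) ((S ^ k) x)‖ := by rw [pow_succ']; rfl
      _ ≤ ‖(S : E →L[𝕜] E)‖ * (‖(S : E →L[𝕜] E)‖ ^ k * ‖x‖) :=
        (S : E →L[𝕜] E).le_of_opNorm_le_of_le le_rfl ih
      _ = ‖(S : E →L[𝕜] E)‖ ^ (k + 1) * ‖x‖ := by ring

lemma one_le_norm_of_forall_mul_norm_le_norm_pow_apply [Nontrivial E] (S : E ≃L[𝕜] E) {c : ℝ}
    (hc : 0 < c) (h : ∀ (k : ℕ) (x : E), c * ‖x‖ ≤ ‖(S ^ k) x‖) :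
    1 ≤ ‖(S : E →L[𝕜] E)‖ := by
  by_contra! hS
  obtain ⟨x, hx⟩ := exists_ne (0 : E)
  obtain ⟨k, hk⟩ := exists_pow_lt_of_lt_one hc hS
  exact (mul_lt_mul_of_pos_right hk (norm_pos_iff.mpr hx)).not_ge
    ((h k x).trans (S.norm_pow_apply_le k x))

end ContinuousLinearEquiv

variable {H : Type} [NormedAddCommGroup H] [InnerProductSpace ℂ H]

lemma IsFrame.norm_le_of_tsum_eq {I : Type} {f : I → H} {A B : ℝ} (hf : IsFrame f A B)
    {x y : H} (h : ∑' n, ‖⟪x, f n⟫_ℂ‖ ^ 2 = ∑' n, ‖⟪y, f n⟫_ℂ‖ ^ 2) :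
    ‖x‖ ≤ √(B / A) * ‖y‖ := by
  obtain ⟨hA, hB, hbounds⟩ := hf
  have hsq : ‖x‖ ^ 2 ≤ B / A * ‖y‖ ^ 2 := by
    rw [div_mul_eq_mul_div, le_div_iff₀ hA]
    linarith [(hbounds x).2.1, (hbounds y).2.2]
  rw [← Real.sqrt_sq (norm_nonneg x), ← Real.sqrt_sq (norm_nonneg y),
    ← Real.sqrt_mul (div_pos hB hA).le]
  exact Real.sqrt_le_sqrt hsq

section Orbit

variable [CompleteSpace H] {f : ℤ → H} (T : H ≃L[ℂ] H) (hT : ∀ n : ℤ, f n = (T ^ n) (f 0))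
include hT

lemma tsum_norm_inner_adjoint_zpow_apply (n : ℤ) (x : H) :
    ∑' m, ‖⟪ContinuousLinearMap.adjoint ((T ^ n : H ≃L[ℂ] H) : H →L[ℂ] H) x, f m⟫_ℂ‖ ^ 2 =
      ∑' m, ‖⟪x, f m⟫_ℂ‖ ^ 2 := by
  have hshift : ∀ m, (T ^ n) (f m) = f (n + m) := fun m => by
    rw [hT m, hT (n + m), zpow_add]; rfl
  simp only [ContinuousLinearMap.adjoint_inner_left, ContinuousLinearEquiv.coe_coe, hshift]
  exact (Equiv.addLeft n).tsum_eq fun m => ‖⟪x, f m⟫_ℂ‖ ^ 2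

variable {A B : ℝ} (hf : IsFrame f A B)
include hf

lemma norm_zpow_le_sqrt_div (n : ℤ) :
    ‖((T ^ n : H ≃L[ℂ] H) : H →L[ℂ] H)‖ ≤ √(B / A) := by
  rw [← ContinuousLinearMap.adjoint.norm_map]
  exact ContinuousLinearMap.opNorm_le_bound _ (Real.sqrt_nonneg _) fun x =>
    hf.norm_le_of_tsum_eq (tsum_norm_inner_adjoint_zpow_apply T hT n x)

lemma norm_le_sqrt_div_mul_norm_zpow_apply (n : ℤ) (x : H) :
    ‖x‖ ≤ √(B / A) * ‖(T ^ n) x‖ := by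
  calc ‖x‖ = ‖((T ^ (-n) * T ^ n : H ≃L[ℂ] H) : H →L[ℂ] H) x‖ := by
        rw [← zpow_add, neg_add_cancel, zpow_zero]; rfl
    _ ≤ √(B / A) * ‖(T ^ n) x‖ :=
        ContinuousLinearMap.le_of_opNorm_le _ (norm_zpow_le_sqrt_div T hT hf (-n)) _

end Orbit

theorem stmt0_general {H : Type} [NormedAddCommGroup H] [InnerProductSpace ℂ H]
    [CompleteSpace H] [Nontrivial H]
    (f : ℤ → H) (A B : ℝ) (hframe : IsFrame f A B)
    (T : H ≃L[ℂ] H) (hT : ∀ n : ℤ, f n = (T ^ n) (f 0)) :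
    ∀ n : ℤ,
      (∀ x : H,
        Real.sqrt (A / B) * ‖x‖ ≤ ‖(T ^ n) x‖ ∧
        ‖(T ^ n) x‖ ≤ Real.sqrt (B / A) * ‖x‖ ∧
        Real.sqrt (A / B) * ‖x‖ ≤
          ‖(ContinuousLinearMap.adjoint ((T ^ n : H ≃L[ℂ] H) : H →L[ℂ] H)) x‖ ∧
        ‖(ContinuousLinearMap.adjoint ((T ^ n : H ≃L[ℂ] H) : H →L[ℂ] H)) x‖ ≤
          Real.sqrt (B / A) * ‖x‖) ∧
      1 ≤ ‖((T ^ n : H ≃L[ℂ] H) : H →L[ℂ] H)‖ ∧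
      ‖((T ^ n : H ≃L[ℂ] H) : H →L[ℂ] H)‖ ≤ Real.sqrt (B / A) := by
  have hA : 0 < A := hframe.1
  have hB : 0 < B := hframe.2.1
  have hflip {u v : ℝ} : u ≤ √(B / A) * v → √(A / B) * u ≤ v :=
    Real.sqrt_div_mul_le_of_le_sqrt_div_mul hA hB
  have hlower (m : ℤ) (x : H) : √(A / B) * ‖x‖ ≤ ‖(T ^ m) x‖ :=
    hflip (norm_le_sqrt_div_mul_norm_zpow_apply T hT hframe m x)
  intro n
  refine ⟨fun x => ⟨hlower n x, ?_, ?_, ?_⟩, ?_, norm_zpow_le_sqrt_div T hT hframe n⟩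
  · exact ContinuousLinearMap.le_of_opNorm_le _ (norm_zpow_le_sqrt_div T hT hframe n) x
  · exact hflip (hframe.norm_le_of_tsum_eq (tsum_norm_inner_adjoint_zpow_apply T hT n x).symm)
  · exact hframe.norm_le_of_tsum_eq (tsum_norm_inner_adjoint_zpow_apply T hT n x)
  · refine (T ^ n).one_le_norm_of_forall_mul_norm_le_norm_pow_apply
      (Real.sqrt_pos.mpr (div_pos hA hB)) fun k x => ?_
    rw [← zpow_natCast, ← zpow_mul]
    exact hlower _ x

theorem stmt0 {H : Type} [NormedAddCommGroup H] [InnerProductSpace ℂ H]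
    [CompleteSpace H] [TopologicalSpace.SeparableSpace H] [Nontrivial H]
    (f : ℤ → H) (A B : ℝ) (hframe : IsFrame f A B)
    (T : H ≃L[ℂ] H) (hT : ∀ n : ℤ, f n = (T ^ n) (f 0)) :
    ∀ n : ℤ,
      (∀ x : H,
        Real.sqrt (A / B) * ‖x‖ ≤ ‖(T ^ n) x‖ ∧
        ‖(T ^ n) x‖ ≤ Real.sqrt (B / A) * ‖x‖ ∧
        Real.sqrt (A / B) * ‖x‖ ≤
          ‖(ContinuousLinearMap.adjoint ((T ^ n : H ≃L[ℂ] H) : H →L[ℂ] H)) x‖ ∧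
        ‖(ContinuousLinearMap.adjoint ((T ^ n : H ≃L[ℂ] H) : H →L[ℂ] H)) x‖ ≤
          Real.sqrt (B / A) * ‖x‖) ∧
      1 ≤ ‖((T ^ n : H ≃L[ℂ] H) : H →L[ℂ] H)‖ ∧
      ‖((T ^ n : H ≃L[ℂ] H) : H →L[ℂ] H)‖ ≤ Real.sqrt (B / A) :=
  stmt0_general f A B hframe T hT
end
end

section
/- Let (f_n)_{n∈ℤ} be a linearly independent frame of H and let U : ℓ²(ℤ) → H be its synthesis operator. Then there exists T ∈ GL(H) such that f_n = Tⁿ f_0 for all n ∈ ℤ if and only if the kernel N(U) of U is invariant under both the right-shift operator 𝒯 (the map sending a sequence (c_n) to (c_{n+1})) and its inverse 𝒯⁻¹, i.e. 𝒯 N(U) ⊆ N(U) and 𝒯⁻¹ N(U) ⊆ N(U). -/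
/-!
If `f n = Tⁿ f 0`, then `T` shifts the frame, so `U ∘ 𝒯 = T⁻¹ ∘ U` and `U ∘ 𝒯⁻¹ = T ∘ U`,
and both shifts preserve `ker U`. Conversely, the lower frame bound makes the frame operator
`U U†` coercive, hence `U` is surjective; by the open mapping theorem `𝒯⁻¹` then descends along
`U` to an automorphism `T` of `H` with `T ∘ U = U ∘ 𝒯⁻¹`, and `T (f n) = f (n + 1)` because
`𝒯⁻¹` moves the `n`-th unit vector to the `(n + 1)`-st.
-/

noncomputable section

open scoped InnerProductSpace

open Function

open scoped InnerProduct

namespace ContinuousLinearMap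

section Banach

variable {𝕜 E F : Type*} [NontriviallyNormedField 𝕜]
  [NormedAddCommGroup E] [NormedSpace 𝕜 E] [CompleteSpace E]
  [NormedAddCommGroup F] [NormedSpace 𝕜 F] [CompleteSpace F]

theorem exists_comp_eq_of_ker_le {G : Type*} [NormedAddCommGroup G] [NormedSpace 𝕜 G]
    (U : E →L[𝕜] F) (hU : Surjective U) (g : E →L[𝕜] G)
    (hker : LinearMap.ker (U : E →ₗ[𝕜] F) ≤ LinearMap.ker (g : E →ₗ[𝕜] G)) :
    ∃ W : F →L[𝕜] G, W ∘L U = g := by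
  let W : F →ₗ[𝕜] G := (LinearMap.ker (U : E →ₗ[𝕜] F)).liftQ (g : E →ₗ[𝕜] G) hker ∘ₗ
    ((U : E →ₗ[𝕜] F).quotKerEquivOfSurjective hU).symm.toLinearMap
  have hWU : ∀ x, W (U x) = g x := fun x => by
    change (LinearMap.ker _).liftQ _ hker
      (((U : E →ₗ[𝕜] F).quotKerEquivOfSurjective hU).symm ((U : E →ₗ[𝕜] F) x)) = g x
    rw [LinearMap.quotKerEquivOfSurjective_symm_apply]
    rfl
  have hW : Continuous W := (U.isQuotientMap hU).continuous_iff.2 <| by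
    convert g.continuous using 1
    exact funext hWU
  exact ⟨⟨W, hW⟩, ext hWU⟩

theorem exists_equiv_intertwining_of_ker_invariant (U : E →L[𝕜] F) (hU : Surjective U)
    (S : E ≃L[𝕜] E) (hS : ∀ c, U c = 0 → U (S c) = 0)
    (hS' : ∀ c, U c = 0 → U (S.symm c) = 0) : ∃ T : F ≃L[𝕜] F, ∀ c, T (U c) = U (S c) := by
  obtain ⟨W, hW⟩ := U.exists_comp_eq_of_ker_le hU (U ∘L (S : E →L[𝕜] E)) hS
  obtain ⟨W', hW'⟩ := U.exists_comp_eq_of_ker_le hU (U ∘L (S.symm : E →L[𝕜] E)) hS'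
  have hWU : ∀ c, W (U c) = U (S c) := fun c => congr($hW c)
  have hW'U : ∀ c, W' (U c) = U (S.symm c) := fun c => congr($hW' c)
  refine ⟨ContinuousLinearEquiv.equivOfInverse W W' ?_ ?_, hWU⟩
  · intro x
    obtain ⟨c, rfl⟩ := hU x
    rw [hWU, hW'U, S.symm_apply_apply]
  · intro x
    obtain ⟨c, rfl⟩ := hU x
    rw [hW'U, hWU, S.apply_symm_apply]

end Banach

section Hilbert

variable {𝕜 E F : Type*} [RCLike 𝕜]
  [NormedAddCommGroup E] [InnerProductSpace 𝕜 E] [CompleteSpace E]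
  [NormedAddCommGroup F] [InnerProductSpace 𝕜 F] [CompleteSpace F]

open RCLike

theorem bijective_of_coercive {T : E →L[𝕜] E} {c : ℝ} (hc : 0 < c)
    (hT : ∀ x, c * ‖x‖ ^ 2 ≤ re ⟪x, T x⟫_𝕜) : Bijective T := by
  have hbelow : ∀ x, c * ‖x‖ ≤ ‖T x‖ := by
    intro x
    rcases (norm_nonneg x).eq_or_lt with hx | hx
    · simp [← hx]
    refine le_of_mul_le_mul_right ?_ hx
    calc c * ‖x‖ * ‖x‖ = c * ‖x‖ ^ 2 := by ring
      _ ≤ re ⟪x, T x⟫_𝕜 := hT x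
      _ ≤ ‖⟪x, T x⟫_𝕜‖ := re_le_norm _
      _ ≤ ‖x‖ * ‖T x‖ := norm_inner_le_norm _ _
      _ = ‖T x‖ * ‖x‖ := mul_comm _ _
  refine (bijective_iff_dense_range_and_antilipschitz T).2 ⟨?_, ⟨c⁻¹.toNNReal, ?_⟩⟩
  · rw [Submodule.topologicalClosure_eq_top_iff, Submodule.eq_bot_iff]
    intro y hy
    have hTy : ⟪y, T y⟫_𝕜 = 0 :=
      (Submodule.mem_orthogonal' _ y).1 hy (T y) ⟨y, rfl⟩
    have := hT y
    rw [hTy, map_zero] at this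
    exact norm_eq_zero.1 (pow_eq_zero_iff two_ne_zero |>.1 (by nlinarith [sq_nonneg ‖y‖]))
  · refine T.antilipschitz_of_bound fun x => ?_
    rw [Real.coe_toNNReal _ (inv_nonneg.2 hc.le), inv_mul_eq_div, le_div_iff₀ hc, mul_comm]
    exact hbelow x

theorem surjective_of_adjoint_bounded_below (U : E →L[𝕜] F) {c : ℝ} (hc : 0 < c)
    (hU : ∀ y, c * ‖y‖ ^ 2 ≤ ‖(U†) y‖ ^ 2) : Surjective U := by
  have hS : Bijective (U ∘L U†) := bijective_of_coercive hc fun y => by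
    simpa only [apply_norm_sq_eq_inner_adjoint_right, adjoint_adjoint] using hU y
  intro y
  obtain ⟨x, hx⟩ := hS.2 y
  exact ⟨(U†) x, hx⟩

end Hilbert

end ContinuousLinearMap

section Synthesis

variable {H I : Type} [NormedAddCommGroup H] [InnerProductSpace ℂ H] {f : I → H}
  {U : lp (fun _ : I => ℂ) 2 →L[ℂ] H}

theorem synthesis_single [DecidableEq I]
    (hU : ∀ c : lp (fun _ : I => ℂ) 2, HasSum (fun n => c n • f n) (U c)) (n : I) :
    U (lp.single 2 n 1) = f n := by
  refine (hU _).unique ?_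
  convert hasSum_ite_eq n (f n) using 2 with m
  by_cases h : m = n <;> simp [h]

theorem synthesis_apply_eq_of_reindex
    (hU : ∀ c : lp (fun _ : I => ℂ) 2, HasSum (fun n => c n • f n) (U c))
    (e : I ≃ I) (L : H →L[ℂ] H) (hL : ∀ n, L (f (e n)) = f n)
    {c d : lp (fun _ : I => ℂ) 2} (hd : ∀ n, d n = c (e n)) : U d = L (U c) := by
  refine (hU d).unique ?_
  convert e.hasSum_iff.2 ((hU c).mapL L) using 2 with n
  simp [hd, hL]

variable [CompleteSpace H]

theorem adjoint_synthesis_apply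
    (hU : ∀ c : lp (fun _ : I => ℂ) 2, HasSum (fun n => c n • f n) (U c)) (x : H) (n : I) :
    ((U†) x) n = ⟪f n, x⟫_ℂ := by
  classical
  rw [← synthesis_single hU n, ← ContinuousLinearMap.adjoint_inner_right, lp.inner_single_left]
  simp

theorem norm_adjoint_synthesis_sq
    (hU : ∀ c : lp (fun _ : I => ℂ) 2, HasSum (fun n => c n • f n) (U c)) (x : H) :
    ‖(U†) x‖ ^ 2 = ∑' n, ‖⟪x, f n⟫_ℂ‖ ^ 2 := by
  have := lp.norm_rpow_eq_tsum (p := 2) (by norm_num) ((U†) x)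
  simp only [ENNReal.toReal_ofNat, Real.rpow_two, adjoint_synthesis_apply hU] at this
  simpa only [norm_inner_symm] using this

theorem IsFrame.surjective_synthesis {A B : ℝ} (hf : IsFrame f A B)
    (hU : ∀ c : lp (fun _ : I => ℂ) 2, HasSum (fun n => c n • f n) (U c)) : Surjective U :=
  U.surjective_of_adjoint_bounded_below hf.1 fun x => by
    rw [norm_adjoint_synthesis_sq hU]
    exact (hf.2.2 x).2.1

end Synthesis

theorem ContinuousLinearEquiv.forall_eq_zpow_apply_iff {R M : Type*} [Semiring R]
    [TopologicalSpace M] [AddCommMonoid M] [Module R M] (T : M ≃L[R] M) (f : ℤ → M) :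
    (∀ n, f n = (T ^ n) (f 0)) ↔ ∀ n, T (f n) = f (n + 1) := by
  have hstep : ∀ (n : ℤ) x, (T ^ (n + 1)) x = T ((T ^ n) x) := fun n x => by
    rw [add_comm, zpow_one_add]
    rfl
  refine ⟨fun h n => by rw [h n, h (n + 1), hstep], fun h n => ?_⟩
  induction n using Int.induction_on with
  | zero => rfl
  | succ k ih => rw [← h, ih, hstep]
  | pred k ih =>
    apply T.injective
    rw [h, sub_add_cancel, ih, ← hstep, sub_add_cancel]

theorem stmt1_general {H : Type} [NormedAddCommGroup H] [InnerProductSpace ℂ H]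
    [CompleteSpace H]
    (f : ℤ → H) (A B : ℝ) (hframe : IsFrame f A B)
    (U : lp (fun _ : ℤ => ℂ) 2 →L[ℂ] H)
    (hU : ∀ c : lp (fun _ : ℤ => ℂ) 2, HasSum (fun n : ℤ => c n • f n) (U c))
    (𝒯 : lp (fun _ : ℤ => ℂ) 2 ≃L[ℂ] lp (fun _ : ℤ => ℂ) 2)
    (h𝒯 : ∀ (c : lp (fun _ : ℤ => ℂ) 2) (n : ℤ), (𝒯 c) n = c (n + 1)) :
    (∃ T : H ≃L[ℂ] H, ∀ n : ℤ, f n = (T ^ n) (f 0)) ↔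
      ((∀ c : lp (fun _ : ℤ => ℂ) 2, U c = 0 → U (𝒯 c) = 0) ∧
       (∀ c : lp (fun _ : ℤ => ℂ) 2, U c = 0 → U (𝒯.symm c) = 0)) := by
  have h𝒯symm : ∀ c n, (𝒯.symm c) n = c (n - 1) := fun c n => by
    simpa using (h𝒯 (𝒯.symm c) (n - 1)).symm
  simp only [ContinuousLinearEquiv.forall_eq_zpow_apply_iff]
  constructor
  · rintro ⟨T, hT⟩
    refine ⟨fun c hc => ?_, fun c hc => ?_⟩
    · rw [synthesis_apply_eq_of_reindex hU (Equiv.addRight 1) (T.symm : H →L[ℂ] H)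
        (fun n => T.symm_apply_eq.2 (hT n).symm) (h𝒯 c), hc, map_zero]
    · rw [synthesis_apply_eq_of_reindex hU (Equiv.subRight 1) (T : H →L[ℂ] H)
        (fun n => by simp [hT]) (h𝒯symm c), hc, map_zero]
  · rintro ⟨hker, hker'⟩
    obtain ⟨T, hT⟩ := U.exists_equiv_intertwining_of_ker_invariant (hframe.surjective_synthesis hU)
      𝒯.symm hker' (by simpa using hker)
    have hsingle : ∀ n : ℤ, 𝒯.symm (lp.single 2 n 1) = lp.single 2 (n + 1) 1 := fun n =>
      𝒯.symm_apply_eq.2 <| lp.ext <| funext fun m => by simp [h𝒯, Pi.single_apply]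
    exact ⟨T, fun n => by rw [← synthesis_single hU, hT, hsingle, synthesis_single hU]⟩

theorem stmt1 {H : Type} [NormedAddCommGroup H] [InnerProductSpace ℂ H]
    [CompleteSpace H] [TopologicalSpace.SeparableSpace H]
    (f : ℤ → H) (A B : ℝ) (hframe : IsFrame f A B)
    (hli : LinearIndependent ℂ f)
    (U : lp (fun _ : ℤ => ℂ) 2 →L[ℂ] H)
    (hU : ∀ c : lp (fun _ : ℤ => ℂ) 2, HasSum (fun n : ℤ => c n • f n) (U c))
    (𝒯 : lp (fun _ : ℤ => ℂ) 2 ≃L[ℂ] lp (fun _ : ℤ => ℂ) 2)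
    (h𝒯 : ∀ (c : lp (fun _ : ℤ => ℂ) 2) (n : ℤ), (𝒯 c) n = c (n + 1)) :
    (∃ T : H ≃L[ℂ] H, ∀ n : ℤ, f n = (T ^ n) (f 0)) ↔
      ((∀ c : lp (fun _ : ℤ => ℂ) 2, U c = 0 → U (𝒯 c) = 0) ∧
       (∀ c : lp (fun _ : ℤ => ℂ) 2, U c = 0 → U (𝒯.symm c) = 0)) :=
  stmt1_general f A B hframe U hU 𝒯 h𝒯
end
end

section
/- Let T : H → H be an injective bounded linear operator and let (f_n)_{n∈ℤ} be a frame of H such that T f_n = f_{n+1} for all n ∈ ℤ. Then T is surjective (hence T ∈ GL(H)). -/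
noncomputable section

open scoped InnerProductSpace

/-!
The frame coefficients of `T⋆ x` are those of `x`, shifted by one: `⟪T⋆ x, f n⟫ = ⟪x, f (n + 1)⟫`.
The lower and upper frame bounds therefore give `A ‖x‖² ≤ B ‖T⋆ x‖²`, so `T⋆` is bounded below.
Then `⟪T T⋆ x, x⟫ = ‖T⋆ x‖²` makes `T T⋆` coercive, hence invertible, and `T` is surjective.
-/

open ContinuousLinearMap

theorem ContinuousLinearMap.surjective_of_mul_norm_sq_le_norm_adjoint_sq {𝕜 E F : Type*}
    [RCLike 𝕜] [NormedAddCommGroup E] [InnerProductSpace 𝕜 E] [CompleteSpace E]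
    [NormedAddCommGroup F] [InnerProductSpace 𝕜 F] [CompleteSpace F]
    (T : E →L[𝕜] F) {c : ℝ} (hc : 0 < c) (h : ∀ x, c * ‖x‖ ^ 2 ≤ ‖adjoint T x‖ ^ 2) :
    Function.Surjective T := by
  have hcoercive : ∀ x, ‖x‖ ^ 2 * c.toNNReal ≤ ‖⟪(T ∘L adjoint T) x, x⟫_𝕜‖ := fun x => by
    rw [comp_apply, ← adjoint_inner_right, inner_self_eq_norm_sq_to_K, norm_pow,
      RCLike.norm_ofReal, abs_norm, Real.coe_toNNReal _ hc.le, mul_comm]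
    exact h x
  have hunit := isUnit_of_forall_le_norm_inner_map _ (Real.toNNReal_pos.mpr hc) hcoercive
  exact Function.Surjective.of_comp (isUnit_iff_bijective.mp hunit).surjective

theorem IsFrame.mul_norm_sq_le_mul_norm_adjoint_sq {H I : Type} [NormedAddCommGroup H]
    [InnerProductSpace ℂ H] [CompleteSpace H] {f : I → H} {A B : ℝ} (hf : IsFrame f A B)
    (T : H →L[ℂ] H) (e : I ≃ I) (hT : ∀ i, T (f i) = f (e i)) (x : H) :
    A * ‖x‖ ^ 2 ≤ B * ‖adjoint T x‖ ^ 2 := by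
  obtain ⟨-, -, hbounds⟩ := hf
  calc A * ‖x‖ ^ 2 ≤ ∑' i, ‖⟪x, f i⟫_ℂ‖ ^ 2 := (hbounds x).2.1
    _ = ∑' i, ‖⟪x, f (e i)⟫_ℂ‖ ^ 2 := (e.tsum_eq fun i => ‖⟪x, f i⟫_ℂ‖ ^ 2).symm
    _ = ∑' i, ‖⟪adjoint T x, f i⟫_ℂ‖ ^ 2 := by simp only [adjoint_inner_left, hT]
    _ ≤ B * ‖adjoint T x‖ ^ 2 := (hbounds _).2.2

theorem stmt2_general {H : Type} [NormedAddCommGroup H] [InnerProductSpace ℂ H]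
    [CompleteSpace H]
    (f : ℤ → H) (hframe : ∃ A B : ℝ, IsFrame f A B)
    (T : H →L[ℂ] H)
    (hT : ∀ n : ℤ, T (f n) = f (n + 1)) :
    Function.Surjective T := by
  obtain ⟨A, B, hf⟩ := hframe
  have hB : 0 < B := hf.2.1
  refine T.surjective_of_mul_norm_sq_le_norm_adjoint_sq (div_pos hf.1 hB) fun x => ?_
  have hbelow := hf.mul_norm_sq_le_mul_norm_adjoint_sq T (Equiv.addRight 1) hT x
  rw [div_mul_eq_mul_div, div_le_iff₀ hB, mul_comm _ B]
  exact hbelow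

theorem stmt2 {H : Type} [NormedAddCommGroup H] [InnerProductSpace ℂ H]
    [CompleteSpace H] [TopologicalSpace.SeparableSpace H]
    (f : ℤ → H) (hframe : ∃ A B : ℝ, IsFrame f A B)
    (T : H →L[ℂ] H) (hinj : Function.Injective T)
    (hT : ∀ n : ℤ, T (f n) = f (n + 1)) :
    Function.Surjective T :=
  stmt2_general f hframe T hT
end
end

section
/- If a frame (f_n)_{n∈ℤ} of a nontrivial Hilbert space H satisfies f_n = Tⁿ f_0 for all n ∈ ℤ for some T ∈ GL(H), then (f_n) is norm-bounded below: there exists m > 0 such that ‖f_n‖ ≥ m for all n ∈ ℤ. -/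
noncomputable section

open scoped InnerProductSpace

/-!
Shifting the frame by `n` gives the frame `k ↦ Tⁿ f k` with the same bounds, so
`A ‖y‖² ≤ B ‖(Tⁿ)† y‖²` for every `y` and every `n`; hence every power of `T` has norm at most
`√(B / A)`. Since `f k = T^(k - n) (f n)`, each `‖f n‖` is at least `‖f k‖ / √(B / A)` for a
fixed `k` with `f k ≠ 0`, which exists because the lower frame bound is positive.
-/

open scoped InnerProduct

theorem ContinuousLinearMap.opNorm_le_sqrt_div_of_mul_norm_sq_le {𝕜 E F : Type*}
    [NontriviallyNormedField 𝕜] [SeminormedAddCommGroup E] [SeminormedAddCommGroup F]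
    [NormedSpace 𝕜 E] [NormedSpace 𝕜 F] (M : E →L[𝕜] F) {A B : ℝ} (hA : 0 < A)
    (h : ∀ x, A * ‖M x‖ ^ 2 ≤ B * ‖x‖ ^ 2) : ‖M‖ ≤ √(B / A) := by
  refine M.opNorm_le_bound (Real.sqrt_nonneg _) fun x => ?_
  rw [← Real.sqrt_sq (norm_nonneg x), ← Real.sqrt_mul' _ (sq_nonneg _)]
  refine Real.le_sqrt_of_sq_le ?_
  rw [div_mul_eq_mul_div, le_div_iff₀ hA, mul_comm]
  exact h x

theorem ContinuousLinearEquiv.zpow_apply_zpow_apply {R M : Type*} [Semiring R]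
    [AddCommMonoid M] [TopologicalSpace M] [Module R M] (T : M ≃L[R] M) (m n : ℤ) (x : M) :
    (T ^ m) ((T ^ n) x) = (T ^ (m + n)) x := by
  rw [zpow_add]
  rfl

namespace IsFrame

variable {H I : Type} [NormedAddCommGroup H] [InnerProductSpace ℂ H] {f : I → H} {A B : ℝ}

theorem exists_ne_zero [Nontrivial H] (hf : IsFrame f A B) : ∃ i, f i ≠ 0 := by
  by_contra! hzero
  obtain ⟨x, hx⟩ := exists_ne (0 : H)
  have hlower := (hf.2.2 x).2.1
  simp only [hzero, inner_zero_right, norm_zero, ne_eq, OfNat.ofNat_ne_zero,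
    not_false_eq_true, zero_pow, tsum_zero] at hlower
  exact hlower.not_gt (mul_pos hf.1 (pow_pos (norm_pos_iff.2 hx) 2))

theorem mul_norm_sq_le_mul_norm_adjoint_sq_s3 [CompleteSpace H] (hf : IsFrame f A B)
    (L : H →L[ℂ] H) (e : I ≃ I) (hL : ∀ i, f (e i) = L (f i)) (y : H) :
    A * ‖y‖ ^ 2 ≤ B * ‖(L†) y‖ ^ 2 :=
  calc A * ‖y‖ ^ 2 ≤ ∑' i, ‖⟪y, f i⟫_ℂ‖ ^ 2 := (hf.2.2 y).2.1
    _ = ∑' i, ‖⟪y, f (e i)⟫_ℂ‖ ^ 2 := (e.tsum_eq fun i => ‖⟪y, f i⟫_ℂ‖ ^ 2).symm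
    _ = ∑' i, ‖⟪(L†) y, f i⟫_ℂ‖ ^ 2 := by
        simp only [hL, ContinuousLinearMap.adjoint_inner_left]
    _ ≤ B * ‖(L†) y‖ ^ 2 := (hf.2.2 _).2.2

end IsFrame

theorem IsFrame.norm_zpow_le {H : Type} [NormedAddCommGroup H] [InnerProductSpace ℂ H]
    [CompleteSpace H] {f : ℤ → H} {A B : ℝ} (hf : IsFrame f A B) (T : H ≃L[ℂ] H)
    (hT : ∀ n : ℤ, f n = (T ^ n) (f 0)) (n : ℤ) :
    ‖((T ^ n : H ≃L[ℂ] H) : H →L[ℂ] H)‖ ≤ √(B / A) := by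
  set S : ℤ → H →L[ℂ] H := fun n => ((T ^ n : H ≃L[ℂ] H) : H →L[ℂ] H)
  have hshift : ∀ k, f (k + -n) = S (-n) (f k) := fun k => by
    rw [ContinuousLinearEquiv.coe_coe, hT k, ContinuousLinearEquiv.zpow_apply_zpow_apply,
      hT (k + -n), add_comm]
  have hinv : ∀ x, ((S (-n))†) (((S n)†) x) = x := fun x => by
    have hcomp : S n ∘L S (-n) = ContinuousLinearMap.id ℂ H := by
      ext z
      simp only [S, ContinuousLinearMap.comp_apply, ContinuousLinearEquiv.coe_coe,
        ContinuousLinearEquiv.zpow_apply_zpow_apply, add_neg_cancel, zpow_zero]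
      rfl
    rw [← ContinuousLinearMap.comp_apply, ← ContinuousLinearMap.adjoint_comp, hcomp,
      ContinuousLinearMap.adjoint_id, ContinuousLinearMap.id_apply]
  rw [← LinearIsometryEquiv.norm_map ContinuousLinearMap.adjoint]
  refine (S n)†.opNorm_le_sqrt_div_of_mul_norm_sq_le hf.1 fun x => ?_
  simpa only [hinv] using
    hf.mul_norm_sq_le_mul_norm_adjoint_sq_s3 (S (-n)) (Equiv.addRight (-n)) hshift (((S n)†) x)

theorem stmt3_general {H : Type} [NormedAddCommGroup H] [InnerProductSpace ℂ H]
    [CompleteSpace H] [Nontrivial H]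
    (f : ℤ → H) (hframe : ∃ A B : ℝ, IsFrame f A B)
    (T : H ≃L[ℂ] H) (hT : ∀ n : ℤ, f n = (T ^ n) (f 0)) :
    ∃ m : ℝ, 0 < m ∧ ∀ n : ℤ, m ≤ ‖f n‖ := by
  obtain ⟨A, B, hf⟩ := hframe
  obtain ⟨k, hk⟩ := hf.exists_ne_zero
  have hc : 0 < √(B / A) := Real.sqrt_pos.2 (div_pos hf.2.1 hf.1)
  refine ⟨‖f k‖ / √(B / A), div_pos (norm_pos_iff.2 hk) hc, fun n => ?_⟩
  have hkn : f k = (T ^ (k - n)) (f n) := by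
    rw [hT k, hT n, ContinuousLinearEquiv.zpow_apply_zpow_apply, sub_add_cancel]
  rw [div_le_iff₀ hc, hkn, mul_comm]
  exact ((T ^ (k - n) : H ≃L[ℂ] H) : H →L[ℂ] H).le_of_opNorm_le (hf.norm_zpow_le T hT _) _

theorem stmt3 {H : Type} [NormedAddCommGroup H] [InnerProductSpace ℂ H]
    [CompleteSpace H] [TopologicalSpace.SeparableSpace H] [Nontrivial H]
    (f : ℤ → H) (hframe : ∃ A B : ℝ, IsFrame f A B)
    (T : H ≃L[ℂ] H) (hT : ∀ n : ℤ, f n = (T ^ n) (f 0)) :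
    ∃ m : ℝ, 0 < m ∧ ∀ n : ℤ, m ≤ ‖f n‖ :=
  stmt3_general f hframe T hT
end
end

section
/- If (f_n)_{n∈ℤ} is a tight frame of H and f_n = Tⁿ f_0 for all n ∈ ℤ with T ∈ GL(H), then T is unitary, i.e. ‖T x‖ = ‖x‖ for all x ∈ H (equivalently T* T = I and T T* = I). -/
noncomputable section

open scoped InnerProductSpace

/-- `f` is a tight frame of `H` with bound `A`. -/
def IsTightFrame {H : Type} [NormedAddCommGroup H] [InnerProductSpace ℂ H] {I : Type}
    (f : I → H) (A : ℝ) : Prop :=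
  0 < A ∧ ∀ x : H, HasSum (fun n : I => ‖(inner ℂ x (f n) : ℂ)‖ ^ 2) (A * ‖x‖ ^ 2)

/-!
Write `T†` for the adjoint. Since `⟪T† x, fₙ⟫ = ⟪x, fₙ₊₁⟫`, the frame coefficients of `T† x`
are those of `x` shifted by one, so tightness gives `A ‖T† x‖² = A ‖x‖²`: `T†` is an isometry,
i.e. `T T† = 1`. As `T` is invertible, `T† = T⁻¹`, so `T` is unitary.
-/

open ContinuousLinearMap

namespace IsTightFrame

variable {H : Type} [NormedAddCommGroup H] [InnerProductSpace ℂ H] {I : Type} {f : I → H} {A : ℝ}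

theorem norm_eq_of_hasSum (hf : IsTightFrame f A) {x y : H}
    (h : HasSum (fun i => ‖(⟪x, f i⟫_ℂ)‖ ^ 2) (A * ‖y‖ ^ 2)) : ‖x‖ = ‖y‖ := by
  have hsq : A * ‖x‖ ^ 2 = A * ‖y‖ ^ 2 := (hf.2 x).unique h
  exact (sq_eq_sq₀ (norm_nonneg _) (norm_nonneg _)).1 (mul_left_cancel₀ hf.1.ne' hsq)

theorem norm_adjoint_apply [CompleteSpace H] (hf : IsTightFrame f A) (e : I ≃ I)
    {u : H →L[ℂ] H} (hu : ∀ i, u (f i) = f (e i)) (x : H) : ‖adjoint u x‖ = ‖x‖ := by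
  apply hf.norm_eq_of_hasSum
  simp only [adjoint_inner_left, hu]
  exact e.hasSum_iff.2 (hf.2 x)

end IsTightFrame

theorem ContinuousLinearMap.norm_map_of_isUnit_of_norm_adjoint_map {𝕜 H : Type*} [RCLike 𝕜]
    [NormedAddCommGroup H] [InnerProductSpace 𝕜 H] [CompleteSpace H] {u : H →L[𝕜] H}
    (hu : IsUnit u) (h : ∀ x, ‖adjoint u x‖ = ‖x‖) (x : H) : ‖u x‖ = ‖x‖ := by
  have hmul : u * star u = 1 := by
    simpa [← star_eq_adjoint, mul_def] using (norm_map_iff_adjoint_comp_self _).1 h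
  exact norm_map_of_mem_unitary (hu.mem_unitary_of_mul_star_self hmul) x

theorem ContinuousLinearEquiv.apply_zpow_apply {𝕜 E : Type*} [Semiring 𝕜]
    [TopologicalSpace E] [AddCommMonoid E] [Module 𝕜 E] (T : E ≃L[𝕜] E) (n : ℤ) (x : E) :
    T ((T ^ n) x) = (T ^ (n + 1)) x := by
  rw [add_comm, zpow_one_add]
  rfl

theorem stmt4_general {H : Type} [NormedAddCommGroup H] [InnerProductSpace ℂ H]
    [CompleteSpace H]
    (f : ℤ → H) (A : ℝ) (hframe : IsTightFrame f A)
    (T : H ≃L[ℂ] H) (hT : ∀ n : ℤ, f n = (T ^ n) (f 0)) :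
    ∀ x : H, ‖T x‖ = ‖x‖ := by
  have hshift : ∀ n, (T : H →L[ℂ] H) (f n) = f (Equiv.addRight 1 n) := by
    intro n
    rw [ContinuousLinearEquiv.coe_coe, Equiv.coe_addRight, hT n, hT (n + 1), T.apply_zpow_apply]
  have hunit : IsUnit (T : H →L[ℂ] H) := ⟨(ContinuousLinearEquiv.unitsEquiv ℂ H).symm T, rfl⟩
  exact norm_map_of_isUnit_of_norm_adjoint_map hunit (hframe.norm_adjoint_apply _ hshift)

theorem stmt4 {H : Type} [NormedAddCommGroup H] [InnerProductSpace ℂ H]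
    [CompleteSpace H] [TopologicalSpace.SeparableSpace H]
    (f : ℤ → H) (A : ℝ) (hframe : IsTightFrame f A)
    (T : H ≃L[ℂ] H) (hT : ∀ n : ℤ, f n = (T ^ n) (f 0)) :
    ∀ x : H, ‖T x‖ = ‖x‖ :=
  stmt4_general f A hframe T hT
end
end

section
/- Let (f_n)_{n∈ℤ} be a frame of H with f_n = Tⁿ f_0 for all n ∈ ℤ, where T ∈ GL(H). If T^s is a normal operator for some s ∈ ℤ (i.e. T^s commutes with its adjoint), then T^s is unitary. -/
noncomputable section

open scoped InnerProductSpace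

/-!
Since `⟪(T ^ m)† x, f n⟫ = ⟪x, f (m + n)⟫`, the frame coefficients of `(T ^ m)† x` are a shift of
those of `x`, so the frame bounds give `‖T ^ m‖ = ‖(T ^ m)†‖ ≤ √(B / A)` for every `m : ℤ`. If `z` is
in the spectrum of `R = T ^ s`, then `z ^ k` is in the spectrum of `R ^ k` for all `k : ℤ`, so the
powers of `|z|` are bounded in both directions and `|z| = 1`. A normal element whose spectrum lies
on the unit circle is unitary.
-/

lemma le_one_of_forall_pow_le {r C : ℝ} (h : ∀ k : ℕ, r ^ k ≤ C) : r ≤ 1 := by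
  by_contra! hr
  obtain ⟨k, hk⟩ := pow_unbounded_of_one_lt C hr
  exact (h k).not_gt hk

section Spectrum

variable {𝕜 A : Type*} [NontriviallyNormedField 𝕜] [NormedRing A] [NormedAlgebra 𝕜 A]
  [CompleteSpace A]

lemma spectrum.norm_le_one_of_forall_norm_pow_le {a : A} {C : ℝ} (h : ∀ k : ℕ, ‖a ^ k‖ ≤ C)
    {z : 𝕜} (hz : z ∈ spectrum 𝕜 a) : ‖z‖ ≤ 1 :=
  le_one_of_forall_pow_le fun k ↦ calc
    ‖z‖ ^ k = ‖z ^ k‖ := (norm_pow z k).symm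
    _ ≤ ‖a ^ k‖ * ‖(1 : A)‖ := spectrum.norm_le_norm_mul_of_mem (spectrum.pow_mem_pow a k hz)
    _ ≤ C * ‖(1 : A)‖ := by gcongr; exact h k

lemma spectrum.norm_eq_one_of_forall_norm_zpow_le {u : Aˣ} {C : ℝ}
    (h : ∀ n : ℤ, ‖((u ^ n : Aˣ) : A)‖ ≤ C) {z : 𝕜} (hz : z ∈ spectrum 𝕜 (u : A)) : ‖z‖ = 1 := by
  have hz0 : z ≠ 0 := by
    rintro rfl
    exact (spectrum.zero_notMem_iff 𝕜).mpr u.isUnit hz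
  have hz_inv : z⁻¹ ∈ spectrum 𝕜 ((u⁻¹ : Aˣ) : A) := by
    rw [← spectrum.map_inv]
    exact Set.inv_mem_inv.mpr hz
  have hle : ‖z‖ ≤ 1 := spectrum.norm_le_one_of_forall_norm_pow_le
    (fun k ↦ by simpa using h k) hz
  have hinv_le : ‖z‖⁻¹ ≤ 1 := by
    rw [← norm_inv]
    exact spectrum.norm_le_one_of_forall_norm_pow_le (fun k ↦ by simpa using h (-k)) hz_inv
  have hpos : 0 < ‖z‖ := norm_pos_iff.mpr hz0
  exact le_antisymm hle (by rwa [inv_le_one₀ hpos] at hinv_le)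

end Spectrum

lemma spectrum.subset_unitary_of_forall_norm_zpow_le {A : Type*} [NormedRing A]
    [NormedAlgebra ℂ A] [CompleteSpace A] {u : Aˣ} {C : ℝ}
    (h : ∀ n : ℤ, ‖((u ^ n : Aˣ) : A)‖ ≤ C) : spectrum ℂ (u : A) ⊆ unitary ℂ := fun z hz ↦ by
  simp [Unitary.mem_iff_star_mul_self, Complex.conj_mul',
    spectrum.norm_eq_one_of_forall_norm_zpow_le h hz]

namespace IsFrame

variable {H I : Type} [NormedAddCommGroup H] [InnerProductSpace ℂ H] {f : I → H} {A B : ℝ}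

lemma mul_norm_sq_le_of_inner_eq_comp (hf : IsFrame f A B) (e : I ≃ I) {x y : H}
    (h : ∀ n, ⟪y, f n⟫_ℂ = ⟪x, f (e n)⟫_ℂ) : A * ‖y‖ ^ 2 ≤ B * ‖x‖ ^ 2 := calc
  A * ‖y‖ ^ 2 ≤ ∑' n, ‖⟪y, f n⟫_ℂ‖ ^ 2 := (hf.2.2 y).2.1
  _ = ∑' n, ‖⟪x, f (e n)⟫_ℂ‖ ^ 2 := tsum_congr fun n ↦ by rw [h]
  _ = ∑' n, ‖⟪x, f n⟫_ℂ‖ ^ 2 := e.tsum_eq fun n ↦ ‖⟪x, f n⟫_ℂ‖ ^ 2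
  _ ≤ B * ‖x‖ ^ 2 := (hf.2.2 x).2.2

lemma opNorm_le_of_inner_apply_eq_comp (hf : IsFrame f A B) (S : H →L[ℂ] H) (e : I ≃ I)
    (h : ∀ x n, ⟪S x, f n⟫_ℂ = ⟪x, f (e n)⟫_ℂ) : ‖S‖ ≤ √(B / A) := by
  refine S.opNorm_le_bound (Real.sqrt_nonneg _) fun x ↦ ?_
  have hA : 0 < A := hf.1
  have hsq : ‖S x‖ ^ 2 ≤ B / A * ‖x‖ ^ 2 := by
    rw [div_mul_eq_mul_div, le_div_iff₀ hA, mul_comm]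
    exact hf.mul_norm_sq_le_of_inner_eq_comp e (h x)
  calc ‖S x‖ ≤ √(B / A * ‖x‖ ^ 2) := Real.le_sqrt_of_sq_le hsq
    _ = √(B / A) * ‖x‖ := by rw [Real.sqrt_mul' _ (by positivity), Real.sqrt_sq (norm_nonneg x)]

variable [CompleteSpace H]

lemma norm_zpow_le_of_eq_zpow_apply {f : ℤ → H} (hf : IsFrame f A B) {T : H ≃L[ℂ] H}
    (hT : ∀ n : ℤ, f n = (T ^ n) (f 0)) (m : ℤ) :
    ‖((T ^ m : H ≃L[ℂ] H) : H →L[ℂ] H)‖ ≤ √(B / A) := by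
  rw [← LinearIsometryEquiv.norm_map ContinuousLinearMap.adjoint]
  refine hf.opNorm_le_of_inner_apply_eq_comp _ (Equiv.addLeft m) fun x n ↦ ?_
  rw [ContinuousLinearMap.adjoint_inner_left, Equiv.coe_addLeft, hT n, hT (m + n), zpow_add]
  rfl

end IsFrame

theorem stmt5_general {H : Type} [NormedAddCommGroup H] [InnerProductSpace ℂ H]
    [CompleteSpace H]
    (f : ℤ → H) (hframe : ∃ A B : ℝ, IsFrame f A B)
    (T : H ≃L[ℂ] H) (hT : ∀ n : ℤ, f n = (T ^ n) (f 0))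
    (s : ℤ)
    (hnormal : IsStarNormal (((T ^ s : H ≃L[ℂ] H) : H →L[ℂ] H))) :
    ((T ^ s : H ≃L[ℂ] H) : H →L[ℂ] H) ∈ unitary (H →L[ℂ] H) := by
  obtain ⟨A, B, hf⟩ := hframe
  set U := (ContinuousLinearEquiv.unitsEquiv ℂ H).symm T
  have hU : ∀ n : ℤ, ((U ^ n : (H →L[ℂ] H)ˣ) : H →L[ℂ] H) = ((T ^ n : H ≃L[ℂ] H) : H →L[ℂ] H) :=
    fun n ↦ by rw [← map_zpow]; rfl
  rw [← hU] at hnormal ⊢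
  refine mem_unitary_of_spectrum_subset_unitary
    (spectrum.subset_unitary_of_forall_norm_zpow_le (C := √(B / A)) fun n ↦ ?_)
  rw [← zpow_mul, hU]
  exact hf.norm_zpow_le_of_eq_zpow_apply hT _

theorem stmt5 {H : Type} [NormedAddCommGroup H] [InnerProductSpace ℂ H]
    [CompleteSpace H] [TopologicalSpace.SeparableSpace H]
    (f : ℤ → H) (hframe : ∃ A B : ℝ, IsFrame f A B)
    (T : H ≃L[ℂ] H) (hT : ∀ n : ℤ, f n = (T ^ n) (f 0))
    (s : ℤ)
    (hnormal : IsStarNormal (((T ^ s : H ≃L[ℂ] H) : H →L[ℂ] H))) :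
    ((T ^ s : H ≃L[ℂ] H) : H →L[ℂ] H) ∈ unitary (H →L[ℂ] H) :=
  stmt5_general f hframe T hT s hnormal
end
end

section
/- Let (f_n)_{n∈ℤ} be a frame of H such that the map n ↦ f_n is injective and f_n = Tⁿ f_0 for all n ∈ ℤ, where T ∈ GL(H). Then T is not self-adjoint: T ≠ T*. -/
noncomputable section

open scoped InnerProductSpace

/-!
If `T` is self-adjoint then `⟪Tᵐ x, Tⁿ y⟫ = ⟪x, Tᵐ⁺ⁿ y⟫`, so the Gram matrix of `fₙ = Tⁿ f₀` is a
Hankel matrix: `⟪f m, f n⟫ = c (m + n)` with `c k = ⟪f 0, f k⟫`. Testing the upper frame bound on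
`f j` and keeping the term `n = -j` gives `‖f 0‖⁴ = |c 0|² ≤ B ‖f j‖² = B |c (2j)|`, while testing
it on `f 0` shows that `c` is square-summable, so `c (2j) → 0`. Hence `f 0 = 0`, and then
`f 1 = T (f 0) = f 0`, contradicting injectivity.
-/

open Filter Topology

theorem norm_inner_self_eq_norm_sq {𝕜 E : Type*} [RCLike 𝕜] [NormedAddCommGroup E]
    [InnerProductSpace 𝕜 E] (x : E) : ‖⟪x, x⟫_𝕜‖ = ‖x‖ ^ 2 := by
  simp [inner_self_eq_norm_sq_to_K]

theorem eq_zero_of_bessel_of_inner_eq_inner_add {𝕜 E : Type*} [RCLike 𝕜] [NormedAddCommGroup E]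
    [InnerProductSpace 𝕜 E] {f : ℤ → E} {B : ℝ}
    (hsum : ∀ x, Summable fun n => ‖⟪x, f n⟫_𝕜‖ ^ 2)
    (hbessel : ∀ x, ∑' n, ‖⟪x, f n⟫_𝕜‖ ^ 2 ≤ B * ‖x‖ ^ 2)
    (hgram : ∀ m n, ⟪f m, f n⟫_𝕜 = ⟪f 0, f (m + n)⟫_𝕜) :
    f 0 = 0 := by
  have hdiag (j : ℤ) : ‖f 0‖ ^ 4 ≤ B * ‖f j‖ ^ 2 :=
    calc ‖f 0‖ ^ 4 = ‖⟪f j, f (-j)⟫_𝕜‖ ^ 2 := by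
          rw [hgram, add_neg_cancel, norm_inner_self_eq_norm_sq]; ring
      _ ≤ ∑' n, ‖⟪f j, f n⟫_𝕜‖ ^ 2 := (hsum (f j)).le_tsum (-j) fun _ _ => by positivity
      _ ≤ B * ‖f j‖ ^ 2 := hbessel (f j)
  have htend : Tendsto (fun j => ‖f j‖ ^ 2) cofinite (𝓝 0) := by
    have hc := ((hsum (f 0)).tendsto_cofinite_zero.comp
      (mul_right_injective₀ (two_ne_zero : (2 : ℤ) ≠ 0)).tendsto_cofinite).sqrt
    rw [Real.sqrt_zero] at hc
    refine hc.congr fun j => ?_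
    rw [Function.comp_apply, Real.sqrt_sq (norm_nonneg _), two_mul, ← hgram,
      norm_inner_self_eq_norm_sq]
  have h4 : ‖f 0‖ ^ 4 ≤ 0 :=
    ge_of_tendsto' (by simpa only [mul_zero] using htend.const_mul B) hdiag
  exact norm_eq_zero.mp <| pow_eq_zero_iff four_ne_zero |>.mp <| h4.antisymm (by positivity)

namespace ContinuousLinearEquiv

variable {𝕜 E : Type*} [RCLike 𝕜] [NormedAddCommGroup E] [InnerProductSpace 𝕜 E] [CompleteSpace E]

theorem isSelfAdjoint_zpow (T : E ≃L[𝕜] E) (hT : IsSelfAdjoint (T : E →L[𝕜] E)) (n : ℤ) :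
    IsSelfAdjoint ((T ^ n : E ≃L[𝕜] E) : E →L[𝕜] E) := by
  set u := (unitsEquiv 𝕜 E).symm T
  have hu : IsSelfAdjoint u := Units.ext hT.star_eq
  have hpow : ((u ^ n : (E →L[𝕜] E)ˣ) : E →L[𝕜] E) = ((T ^ n : E ≃L[𝕜] E) : E →L[𝕜] E) := by
    ext x
    rw [← unitsEquiv_apply, map_zpow, MulEquiv.apply_symm_apply]
    rfl
  rw [← hpow]
  exact congr_arg Units.val (hu.zpow n)

theorem inner_zpow_apply_zpow_apply {T : E ≃L[𝕜] E} (hT : IsSelfAdjoint (T : E →L[𝕜] E))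
    (m n : ℤ) (x y : E) : ⟪(T ^ m) x, (T ^ n) y⟫_𝕜 = ⟪x, (T ^ (m + n)) y⟫_𝕜 := by
  rw [zpow_add]
  exact (T.isSelfAdjoint_zpow hT m).isSymmetric x ((T ^ n) y)

end ContinuousLinearEquiv

theorem stmt6_general {H : Type} [NormedAddCommGroup H] [InnerProductSpace ℂ H]
    [CompleteSpace H]
    (f : ℤ → H) (hframe : ∃ A B : ℝ, IsFrame f A B)
    (hinj : Function.Injective f)
    (T : H ≃L[ℂ] H) (hT : ∀ n : ℤ, f n = (T ^ n) (f 0)) :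
    (T : H →L[ℂ] H) ≠ ContinuousLinearMap.adjoint (T : H →L[ℂ] H) := by
  intro hadj
  obtain ⟨_, B, _, _, hf⟩ := hframe
  have hsa : IsSelfAdjoint (T : H →L[ℂ] H) :=
    ContinuousLinearMap.isSelfAdjoint_iff'.mpr hadj.symm
  have hgram (m n : ℤ) : ⟪f m, f n⟫_ℂ = ⟪f 0, f (m + n)⟫_ℂ := by
    rw [hT m, hT n, hT (m + n), ContinuousLinearEquiv.inner_zpow_apply_zpow_apply hsa]
  have hf0 : f 0 = 0 :=
    eq_zero_of_bessel_of_inner_eq_inner_add (fun x => (hf x).1) (fun x => (hf x).2.2) hgram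
  have hf1 : f 1 = 0 := by rw [hT 1, hf0, map_zero]
  exact one_ne_zero (hinj (hf1.trans hf0.symm))

theorem stmt6 {H : Type} [NormedAddCommGroup H] [InnerProductSpace ℂ H]
    [CompleteSpace H] [TopologicalSpace.SeparableSpace H]
    (f : ℤ → H) (hframe : ∃ A B : ℝ, IsFrame f A B)
    (hinj : Function.Injective f)
    (T : H ≃L[ℂ] H) (hT : ∀ n : ℤ, f n = (T ^ n) (f 0)) :
    (T : H →L[ℂ] H) ≠ ContinuousLinearMap.adjoint (T : H →L[ℂ] H) :=
  stmt6_general f hframe hinj T hT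
end
end

section
/- A linearly independent frame (f_n)_{n∈ℤ} of H is generated over ℤ by a unitary operator (i.e. there exists a unitary T on H with f_n = Tⁿ f_0 for all n ∈ ℤ) if and only if ⟨f_i, f_j⟩ = ⟨f_{i+1}, f_{j+1}⟩ for all i, j ∈ ℤ. -/
/-! Equal Gram matrices make `∑ cₙ fₙ ↦ ∑ cₙ fₙ₊₁` a well-defined norm-preserving map on finitely
supported coefficients. A frame has a positive lower bound, so its span is dense, and so is the
span of the shifted family; the map therefore extends to a unitary `T` with
`T fₙ = fₙ₊₁`. -/

noncomputable section

open scoped InnerProductSpace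

open Finsupp Submodule

section Gram

variable {𝕜 ι E F : Type*} [RCLike 𝕜]
  [NormedAddCommGroup E] [InnerProductSpace 𝕜 E] [NormedAddCommGroup F] [InnerProductSpace 𝕜 F]
  {f : ι → E} {g : ι → F}

theorem inner_linearCombination_eq_of_inner_eq (h : ∀ i j, ⟪f i, f j⟫_𝕜 = ⟪g i, g j⟫_𝕜)
    (c d : ι →₀ 𝕜) :
    ⟪linearCombination 𝕜 f c, linearCombination 𝕜 f d⟫_𝕜 =
      ⟪linearCombination 𝕜 g c, linearCombination 𝕜 g d⟫_𝕜 := by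
  simp [linearCombination_apply, Finsupp.sum, sum_inner, inner_sum, inner_smul_left,
    inner_smul_right, h]

theorem norm_linearCombination_eq_of_inner_eq (h : ∀ i j, ⟪f i, f j⟫_𝕜 = ⟪g i, g j⟫_𝕜)
    (c : ι →₀ 𝕜) : ‖linearCombination 𝕜 g c‖ = ‖linearCombination 𝕜 f c‖ := by
  rw [norm_eq_sqrt_re_inner (𝕜 := 𝕜), norm_eq_sqrt_re_inner (𝕜 := 𝕜),
    inner_linearCombination_eq_of_inner_eq h]

theorem denseRange_linearCombination_iff :
    DenseRange (linearCombination 𝕜 f) ↔ Dense (span 𝕜 (Set.range f) : Set E) := by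
  rw [DenseRange, ← LinearMap.coe_range, range_linearCombination]

theorem exists_linearIsometryEquiv_apply_eq_of_inner_eq [CompleteSpace E] [CompleteSpace F]
    (hf : Dense (span 𝕜 (Set.range f) : Set E)) (hg : Dense (span 𝕜 (Set.range g) : Set F))
    (h : ∀ i j, ⟪f i, f j⟫_𝕜 = ⟪g i, g j⟫_𝕜) :
    ∃ T : E ≃ₗᵢ[𝕜] F, ∀ i, T (f i) = g i := by
  have hT := (LinearEquiv.refl 𝕜 (ι →₀ 𝕜)).extendOfIsometry_eq
    (linearCombination 𝕜 f) (linearCombination 𝕜 g) (denseRange_linearCombination_iff.mpr hf)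
    (denseRange_linearCombination_iff.mpr hg) (norm_linearCombination_eq_of_inner_eq h)
  exact ⟨_, fun i => by simpa using hT (single i 1)⟩

end Gram

theorem IsFrame.eq_zero_of_forall_inner_eq_zero {H I : Type} [NormedAddCommGroup H]
    [InnerProductSpace ℂ H] {f : I → H} {A B : ℝ} (hf : IsFrame f A B) {x : H}
    (hx : ∀ n, ⟪x, f n⟫_ℂ = 0) : x = 0 := by
  obtain ⟨hA, -, hbound⟩ := hf
  have hx' : A * ‖x‖ ^ 2 ≤ 0 := by simpa [hx] using (hbound x).2.1
  simpa using nonpos_of_mul_nonpos_right hx' hA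

theorem IsFrame.dense_span {H I : Type} [NormedAddCommGroup H] [InnerProductSpace ℂ H]
    [CompleteSpace H] {f : I → H} {A B : ℝ} (hf : IsFrame f A B) :
    Dense (span ℂ (Set.range f) : Set H) := by
  rw [dense_iff_topologicalClosure_eq_top, topologicalClosure_eq_top_iff, eq_bot_iff]
  exact fun x hx => hf.eq_zero_of_forall_inner_eq_zero fun n =>
    inner_left_of_mem_orthogonal (subset_span (Set.mem_range_self n)) hx

theorem LinearIsometryEquiv.zpow_apply_of_apply_eq_add_one {R E : Type*} [Semiring R]
    [SeminormedAddCommGroup E] [Module R E] (T : E ≃ₗᵢ[R] E) {f : ℤ → E}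
    (h : ∀ n, T (f n) = f (n + 1)) (n m : ℤ) : (T ^ n) (f m) = f (m + n) := by
  induction n using Int.induction_on generalizing m with
  | zero => simp
  | succ k ih =>
    rw [zpow_add_one, coe_mul, Function.comp_apply, h, ih, add_right_comm, add_assoc]
  | pred k ih =>
    have hinv : T⁻¹ (f m) = f (m - 1) := by
      conv_lhs => rw [← sub_add_cancel m 1, ← h]
      exact T.symm_apply_apply _
    rw [zpow_sub_one, coe_mul, Function.comp_apply, hinv, ih]
    congr 1
    ring

theorem stmt7_general {H : Type} [NormedAddCommGroup H] [InnerProductSpace ℂ H]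
    [CompleteSpace H]
    (f : ℤ → H) (hframe : ∃ A B : ℝ, IsFrame f A B) :
    (∃ T : H ≃ₗᵢ[ℂ] H, ∀ n : ℤ, f n = (T ^ n) (f 0)) ↔
      ∀ i j : ℤ, (inner ℂ (f i) (f j) : ℂ) = inner ℂ (f (i + 1)) (f (j + 1)) := by
  constructor
  · rintro ⟨T, hT⟩ i j
    have hshift : ∀ n, f (n + 1) = T (f n) := fun n => by
      rw [hT, hT n, add_comm, zpow_one_add, LinearIsometryEquiv.coe_mul, Function.comp_apply]
    rw [hshift, hshift, LinearIsometryEquiv.inner_map_map]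
  · intro hinner
    obtain ⟨A, B, hf⟩ := hframe
    have hdense_shift : Dense (span ℂ (Set.range fun n => f (n + 1)) : Set H) := by
      simpa only [← Function.comp_def, (add_right_surjective (1 : ℤ)).range_comp] using
        hf.dense_span
    obtain ⟨T, hT⟩ :=
      exists_linearIsometryEquiv_apply_eq_of_inner_eq hf.dense_span hdense_shift hinner
    exact ⟨T, fun n => by simpa using (T.zpow_apply_of_apply_eq_add_one hT n 0).symm⟩

theorem stmt7 {H : Type} [NormedAddCommGroup H] [InnerProductSpace ℂ H]
    [CompleteSpace H] [TopologicalSpace.SeparableSpace H]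
    (f : ℤ → H) (hframe : ∃ A B : ℝ, IsFrame f A B)
    (hli : LinearIndependent ℂ f) :
    (∃ T : H ≃ₗᵢ[ℂ] H, ∀ n : ℤ, f n = (T ^ n) (f 0)) ↔
      ∀ i j : ℤ, (inner ℂ (f i) (f j) : ℂ) = inner ℂ (f (i + 1)) (f (j + 1)) :=
  stmt7_general f hframe
end
end

section
/- Let (f_n)_{n∈ℤ} be a linearly independent frame of H with frame operator S, let R be the positive self-adjoint square root of S (so R is bounded, self-adjoint, positive, invertible and R∘R = S), and let t_n = R⁻¹ f_n be the canonical tight frame. Then there exists T ∈ GL(H) with f_n = Tⁿ f_0 for all n ∈ ℤ if and only if there exists a unitary operator V on H with t_n = Vⁿ t_0 for all n ∈ ℤ. -/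
noncomputable section

open scoped InnerProductSpace

/-!
Conjugation by `R` turns an operator shifting `(f n)` into one shifting the canonical tight frame
`t n = R⁻¹ (f n)` and back, so everything rests on one fact: an invertible `U` with
`U (t n) = t (n + 1)` is unitary. Since `t` is a Parseval frame and `⟪U* x, t n⟫ = ⟪x, t (n + 1)⟫`,
Parseval's identity shows that `U*` is an isometry; hence `U U* = 1`, and invertibility of `U`
upgrades this to `U* U = 1`.
-/

theorem forall_eq_zpow_smul_iff {G α : Type*} [Group G] [MulAction G α] (g : G) (f : ℤ → α) :
    (∀ n, f n = g ^ n • f 0) ↔ ∀ n, g • f n = f (n + 1) := by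
  refine ⟨fun hf n => ?_, fun hf n => ?_⟩
  · rw [hf n, hf (n + 1), smul_smul, ← zpow_one_add, add_comm]
  · induction n using Int.induction_on with
    | zero => rw [zpow_zero, one_smul]
    | succ k ih => rw [← hf, ih, smul_smul, ← zpow_one_add, add_comm]
    | pred k ih =>
      rw [← inv_smul_eq_iff.mpr (hf (-k - 1)).symm, sub_add_cancel, ih, smul_smul,
        ← zpow_neg_one, ← zpow_add, neg_add_eq_sub]

namespace ContinuousLinearEquiv

variable {R M : Type*} [Semiring R] [TopologicalSpace M] [AddCommMonoid M] [Module R M]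

instance applyMulAction : MulAction (M ≃L[R] M) M where
  smul T x := T x
  one_smul _ := rfl
  mul_smul _ _ _ := rfl

@[simp] theorem smul_def (T : M ≃L[R] M) (x : M) : T • x = T x := rfl

end ContinuousLinearEquiv

namespace LinearIsometryEquiv

variable {R E : Type*} [Semiring R] [SeminormedAddCommGroup E] [Module R E]

instance applyMulAction : MulAction (E ≃ₗᵢ[R] E) E where
  smul T x := T x
  one_smul _ := rfl
  mul_smul _ _ _ := rfl

@[simp] theorem smul_def (T : E ≃ₗᵢ[R] E) (x : E) : T • x = T x := rfl

end LinearIsometryEquiv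

section ParsevalFrame

variable {𝕜 H I : Type*} [RCLike 𝕜] [NormedAddCommGroup H] [InnerProductSpace 𝕜 H]

variable (𝕜) in
def IsParsevalFrame (t : I → H) : Prop :=
  ∀ x : H, HasSum (fun i => ‖⟪x, t i⟫_𝕜‖ ^ 2) (‖x‖ ^ 2)

theorem IsParsevalFrame.of_hasSum_inner_smul {t : I → H}
    (ht : ∀ x, HasSum (fun i => ⟪t i, x⟫_𝕜 • t i) x) : IsParsevalFrame 𝕜 t := by
  intro x
  have h := (ht x).mapL (innerSL 𝕜 x)
  simp only [innerSL_apply_apply, inner_smul_right, inner_self_eq_norm_sq_to_K] at h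
  rw [← RCLike.hasSum_ofReal 𝕜]
  convert h using 2 with i
  · rw [← inner_conj_symm, RCLike.norm_conj, RCLike.mul_conj, RCLike.ofReal_pow]
  · rw [RCLike.ofReal_pow]

theorem hasSum_inner_symm_smul_symm {f : I → H} {S R : H ≃L[𝕜] H}
    (hS : ∀ x, HasSum (fun i => ⟪f i, x⟫_𝕜 • f i) (S x))
    (hR : ((R : H →L[𝕜] H) : H →ₗ[𝕜] H).IsSymmetric) (hRR : ∀ x, R (R x) = S x) (x : H) :
    HasSum (fun i => ⟪R.symm (f i), x⟫_𝕜 • R.symm (f i)) x := by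
  have hRsymm : ∀ y z, ⟪y, R.symm z⟫_𝕜 = ⟪R.symm y, z⟫_𝕜 := fun y z => by
    simpa using hR (R.symm y) (R.symm z)
  have h := (hS (R.symm x)).mapL (R.symm : H →L[𝕜] H)
  simpa only [ContinuousLinearMap.map_smul, ← hRR, ContinuousLinearEquiv.coe_coe,
    ContinuousLinearEquiv.symm_apply_apply, ContinuousLinearEquiv.apply_symm_apply, hRsymm] using h

variable [CompleteSpace H]

theorem IsParsevalFrame.norm_adjoint_apply {t : I → H} (ht : IsParsevalFrame 𝕜 t)
    (e : I ≃ I) {U : H →L[𝕜] H} (hU : ∀ i, U (t i) = t (e i)) (x : H) :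
    ‖ContinuousLinearMap.adjoint U x‖ = ‖x‖ := by
  have h : HasSum (fun i => ‖⟪ContinuousLinearMap.adjoint U x, t i⟫_𝕜‖ ^ 2) (‖x‖ ^ 2) := by
    simp only [ContinuousLinearMap.adjoint_inner_left, hU]
    exact e.hasSum_iff.mpr (ht x)
  exact (sq_eq_sq₀ (norm_nonneg _) (norm_nonneg _)).mp ((ht _).unique h)

theorem ContinuousLinearEquiv.norm_map_of_norm_adjoint_map (U : H ≃L[𝕜] H)
    (hU : ∀ x, ‖ContinuousLinearMap.adjoint (U : H →L[𝕜] H) x‖ = ‖x‖) (x : H) :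
    ‖U x‖ = ‖x‖ := by
  have hright : ∀ y, U (ContinuousLinearMap.adjoint (U : H →L[𝕜] H) y) = y := by
    have h := (ContinuousLinearMap.norm_map_iff_adjoint_comp_self _).mp hU
    rw [ContinuousLinearMap.adjoint_adjoint] at h
    exact fun y => congrArg (· y) h
  have hleft : ContinuousLinearMap.adjoint (U : H →L[𝕜] H) ∘L (U : H →L[𝕜] H) = 1 :=
    ContinuousLinearMap.ext fun y => U.injective (hright (U y))
  exact (ContinuousLinearMap.norm_map_iff_adjoint_comp_self _).mpr hleft x

end ParsevalFrame

theorem stmt9_general {H : Type} [NormedAddCommGroup H] [InnerProductSpace ℂ H]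
    [CompleteSpace H]
    (f : ℤ → H)
    (S R : H ≃L[ℂ] H)
    (hS : ∀ x : H, HasSum (fun n : ℤ => (inner ℂ (f n) x : ℂ) • f n) (S x))
    (hRsa : IsSelfAdjoint (R : H →L[ℂ] H))
    (hRR : ∀ x : H, R (R x) = S x) :
    (∃ T : H ≃L[ℂ] H, ∀ n : ℤ, f n = (T ^ n) (f 0)) ↔
      (∃ V : H ≃ₗᵢ[ℂ] H, ∀ n : ℤ, R.symm (f n) = (V ^ n) (R.symm (f 0))) := by
  have hParseval : IsParsevalFrame ℂ (fun n => R.symm (f n)) :=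
    .of_hasSum_inner_smul (hasSum_inner_symm_smul_symm hS hRsa.isSymmetric hRR)
  simp only [← ContinuousLinearEquiv.smul_def, ← LinearIsometryEquiv.smul_def,
    forall_eq_zpow_smul_iff]
  simp only [ContinuousLinearEquiv.smul_def, LinearIsometryEquiv.smul_def]
  constructor
  · rintro ⟨T, hT⟩
    let U : H ≃L[ℂ] H := R.trans (T.trans R.symm)
    have hU : ∀ n, U (R.symm (f n)) = R.symm (f (n + 1)) := by simpa [U] using hT
    have hU_norm := U.norm_map_of_norm_adjoint_map
      (hParseval.norm_adjoint_apply (Equiv.addRight 1) hU)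
    exact ⟨{ U.toLinearEquiv with norm_map' := hU_norm }, hU⟩
  · rintro ⟨V, hV⟩
    exact ⟨R.symm.trans (V.toContinuousLinearEquiv.trans R), fun n => by simp [hV]⟩

theorem stmt9 {H : Type} [NormedAddCommGroup H] [InnerProductSpace ℂ H]
    [CompleteSpace H] [TopologicalSpace.SeparableSpace H]
    (f : ℤ → H) (hframe : ∃ A B : ℝ, IsFrame f A B)
    (hli : LinearIndependent ℂ f)
    (S R : H ≃L[ℂ] H)
    (hS : ∀ x : H, HasSum (fun n : ℤ => (inner ℂ (f n) x : ℂ) • f n) (S x))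
    (hRsa : IsSelfAdjoint (R : H →L[ℂ] H))
    (hRpos : ∀ x : H, 0 ≤ (inner ℂ x (R x) : ℂ).re)
    (hRR : ∀ x : H, R (R x) = S x) :
    (∃ T : H ≃L[ℂ] H, ∀ n : ℤ, f n = (T ^ n) (f 0)) ↔
      (∃ V : H ≃ₗᵢ[ℂ] H, ∀ n : ℤ, R.symm (f n) = (V ^ n) (R.symm (f 0))) :=
  stmt9_general f S R hS hRsa hRR
end
end

section
/- Let (f_n)_{n∈ℤ} be a frame of H with synthesis operator U such that f_n = Tⁿ f_0 for all n ∈ ℤ for some T ∈ GL(H). If the frame is overcomplete, i.e. the kernel N(U) of U is nonzero, then N(U) is infinite-dimensional (the frame has infinite excess). -/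
noncomputable section

open scoped InnerProductSpace

/-! Since `f (n + 1) = T (f n)`, the synthesis operator intertwines the right shift `S` of `ℓ²(ℤ)`
with `T`: `U ∘ S = T ∘ U`. Hence `N(U)` is `S`-invariant, and if it were finite-dimensional and
nonzero it would contain an eigenvector of `S`. But `S` is an isometry, so an eigenvalue has modulus
one and an eigenvector has coefficients of constant modulus, which are not square-summable. -/

open scoped ENNReal

theorem Memℓp.comp_equiv {α β E : Type*} [NormedAddCommGroup E] {p : ℝ≥0∞} {f : α → E}
    (hf : Memℓp f p) (e : β ≃ α) : Memℓp (f ∘ e) p := by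
  rcases p.trichotomy with rfl | rfl | hp
  · exact memℓp_zero (hf.finite_dsupport.preimage e.injective.injOn)
  · exact memℓp_infty (e.surjective.range_comp (fun i => ‖f i‖) ▸ hf.bddAbove)
  · exact memℓp_gen ((e.summable_iff (f := fun i => ‖f i‖ ^ p.toReal)).2 (hf.summable hp))

section Shift

variable (𝕜 : Type*) {E : Type*} [NormedField 𝕜] [NormedAddCommGroup E] [NormedSpace 𝕜 E]
  {p : ℝ≥0∞}

def lpShift : lp (fun _ : ℤ => E) p →ₗ[𝕜] lp (fun _ : ℤ => E) p where
  toFun c := ⟨c ∘ Equiv.subRight 1, (lp.memℓp c).comp_equiv _⟩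
  map_add' _ _ := rfl
  map_smul' _ _ := rfl

variable {𝕜}

@[simp]
theorem lpShift_apply (c : lp (fun _ : ℤ => E) p) (n : ℤ) : lpShift 𝕜 c n = c (n - 1) := rfl

theorem norm_lpShift (hp : 0 < p.toReal) (c : lp (fun _ : ℤ => E) p) :
    ‖lpShift 𝕜 c‖ = ‖c‖ := by
  rw [← Real.rpow_left_inj (lp.norm_nonneg' _) (lp.norm_nonneg' _) hp.ne', lp.norm_rpow_eq_tsum hp,
    lp.norm_rpow_eq_tsum hp]
  exact (Equiv.subRight 1).tsum_eq (fun n => ‖c n‖ ^ p.toReal)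

theorem not_hasEigenvalue_lpShift (hp : 0 < p.toReal) (μ : 𝕜) :
    ¬ Module.End.HasEigenvalue (lpShift 𝕜 : Module.End 𝕜 (lp (fun _ : ℤ => E) p)) μ := by
  intro h
  obtain ⟨c, hc⟩ := h.exists_hasEigenvector
  have hc_eq : lpShift 𝕜 c = μ • c := hc.apply_eq_smul
  have hμ : ‖μ‖ = 1 := by
    have h := norm_lpShift (𝕜 := 𝕜) hp c
    rw [hc_eq, lp.norm_const_smul (ENNReal.toReal_pos_iff.1 hp).1.ne'] at h
    exact (mul_eq_right₀ (lp.norm_eq_zero_iff.not.2 hc.2)).1 h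
  have hstep : ∀ n, ‖c (n - 1)‖ = ‖c n‖ := fun n => by
    rw [← lpShift_apply (𝕜 := 𝕜), hc_eq, lp.coeFn_smul, Pi.smul_apply, norm_smul, hμ, one_mul]
  have hconst : ∀ n, ‖c n‖ = ‖c 0‖ := fun n => by
    induction n using Int.induction_on with
    | zero => rfl
    | succ n ih => rw [← ih, ← hstep (n + 1), add_sub_cancel_right]
    | pred n ih => rw [← ih, hstep]
  have hsum := (lp.memℓp c).summable hp
  simp only [hconst, summable_const_iff] at hsum
  refine hc.2 (lp.ext (funext fun n => norm_eq_zero.1 ?_))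
  rw [hconst]
  exact (Real.rpow_eq_zero (norm_nonneg _) hp.ne').1 hsum

end Shift

theorem apply_lpShift_of_hasSum {𝕜 H : Type*} [NormedField 𝕜] [AddCommMonoid H] [Module 𝕜 H]
    [TopologicalSpace H] [T2Space H] {p : ℝ≥0∞} {f : ℤ → H}
    {T : H →L[𝕜] H} (hf : ∀ n, f (n + 1) = T (f n)) {U : lp (fun _ : ℤ => 𝕜) p → H}
    (hU : ∀ c, HasSum (fun n => c n • f n) (U c)) (c : lp (fun _ : ℤ => 𝕜) p) :
    U (lpShift 𝕜 c) = T (U c) := by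
  refine (hU _).unique ?_
  rw [← (Equiv.addRight (1 : ℤ)).hasSum_iff]
  simpa [Function.comp_def, hf] using T.hasSum (hU c)

theorem Module.End.exists_hasEigenvalue_of_mapsTo {K V : Type*} [Field K] [IsAlgClosed K]
    [AddCommGroup V] [Module K V] (f : Module.End K V) {W : Submodule K V} [FiniteDimensional K W]
    (hW : W ≠ ⊥) (hf : ∀ x ∈ W, f x ∈ W) : ∃ μ, f.HasEigenvalue μ := by
  have := Submodule.nontrivial_iff_ne_bot.2 hW
  obtain ⟨μ, hμ⟩ := Module.End.exists_eigenvalue (f.restrict hf)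
  obtain ⟨v, hv⟩ := hμ.exists_hasEigenvector
  refine ⟨μ, hasEigenvalue_of_hasEigenvector (x := (v : V)) ⟨mem_eigenspace_iff.2 ?_, ?_⟩⟩
  · exact congrArg Subtype.val hv.apply_eq_smul
  · exact Submodule.coe_eq_zero.not.2 hv.2

theorem ContinuousLinearEquiv.zpow_add_one_apply {𝕜 H : Type*} [Semiring 𝕜] [AddCommMonoid H]
    [Module 𝕜 H] [TopologicalSpace H] (T : H ≃L[𝕜] H) (n : ℤ) (x : H) :
    (T ^ (n + 1)) x = T ((T ^ n) x) := by
  rw [add_comm, zpow_one_add]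
  rfl

theorem stmt10_general {H : Type} [NormedAddCommGroup H] [InnerProductSpace ℂ H]
    (f : ℤ → H)
    (U : lp (fun _ : ℤ => ℂ) 2 →L[ℂ] H)
    (hU : ∀ c : lp (fun _ : ℤ => ℂ) 2, HasSum (fun n : ℤ => c n • f n) (U c))
    (T : H ≃L[ℂ] H) (hT : ∀ n : ℤ, f n = (T ^ n) (f 0))
    (hover : LinearMap.ker (U : lp (fun _ : ℤ => ℂ) 2 →ₗ[ℂ] H) ≠ ⊥) :
    ¬ FiniteDimensional ℂ (LinearMap.ker (U : lp (fun _ : ℤ => ℂ) 2 →ₗ[ℂ] H)) := by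
  intro hfin
  have hstep (n : ℤ) : f (n + 1) = (T : H →L[ℂ] H) (f n) := by
    rw [hT, hT n, T.zpow_add_one_apply]
    rfl
  have hinv : ∀ c ∈ LinearMap.ker (U : lp (fun _ : ℤ => ℂ) 2 →ₗ[ℂ] H),
      lpShift ℂ c ∈ LinearMap.ker (U : lp (fun _ : ℤ => ℂ) 2 →ₗ[ℂ] H) := fun c hc => by
    rw [LinearMap.mem_ker, ContinuousLinearMap.coe_coe] at hc ⊢
    rw [apply_lpShift_of_hasSum hstep hU, hc, map_zero]
  obtain ⟨μ, hμ⟩ := Module.End.exists_hasEigenvalue_of_mapsTo _ hover hinv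
  exact not_hasEigenvalue_lpShift (by norm_num) μ hμ

theorem stmt10 {H : Type} [NormedAddCommGroup H] [InnerProductSpace ℂ H]
    [CompleteSpace H] [TopologicalSpace.SeparableSpace H]
    (f : ℤ → H) (hframe : ∃ A B : ℝ, IsFrame f A B)
    (U : lp (fun _ : ℤ => ℂ) 2 →L[ℂ] H)
    (hU : ∀ c : lp (fun _ : ℤ => ℂ) 2, HasSum (fun n : ℤ => c n • f n) (U c))
    (T : H ≃L[ℂ] H) (hT : ∀ n : ℤ, f n = (T ^ n) (f 0))
    (hover : LinearMap.ker (U : lp (fun _ : ℤ => ℂ) 2 →ₗ[ℂ] H) ≠ ⊥) :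
    ¬ FiniteDimensional ℂ (LinearMap.ker (U : lp (fun _ : ℤ => ℂ) 2 →ₗ[ℂ] H)) :=
  stmt10_general f U hU T hT hover
end
end

section
/- Let (f_n)_{n∈ℤ} be a frame of H with frame operator S and canonical dual frame h_n = S⁻¹ f_n, and suppose f_n = Tⁿ f_0 for all n ∈ ℤ with T ∈ GL(H). Then the set Ip(f_i) := { ⟨f_i, h_j⟩ : j ∈ ℤ } ⊆ ℂ does not depend on i; that is, { ⟨f_i, h_j⟩ : j ∈ ℤ } = { ⟨f_0, h_j⟩ : j ∈ ℤ } for every i ∈ ℤ. -/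
noncomputable section

open scoped InnerProductSpace

/-! If `T` permutes a frame, `T S T† = S` for its frame operator `S`; equivalently `T` preserves the
form `(a, b) ↦ ⟪a, S⁻¹ b⟫`, and so does every power of `T`. Since `f i = Tⁱ f 0` and
`f (j + i) = Tⁱ f j`, this gives `⟪f i, S⁻¹ f (j + i)⟫ = ⟪f 0, S⁻¹ f j⟫`. -/

def ContinuousLinearEquiv.stabilizer {R E α : Type*} [Semiring R] [TopologicalSpace E]
    [AddCommMonoid E] [Module R E] (B : E → E → α) : Subgroup (E ≃L[R] E) where
  carrier := {U | ∀ a b, B (U a) (U b) = B a b}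
  mul_mem' {U V} hU hV a b := (hU (V a) (V b)).trans (hV a b)
  one_mem' _ _ := rfl
  inv_mem' {U} hU a b := by
    have h := hU (U.symm a) (U.symm b)
    simp only [U.apply_symm_apply] at h
    exact h.symm

section FrameOperator

variable {H : Type} [NormedAddCommGroup H] [InnerProductSpace ℂ H] [CompleteSpace H]

theorem frameOperator_conj_adjoint_of_shift {I : Type} {f : I → H} {S : H → H}
    (hS : ∀ x, HasSum (fun n => ⟪f n, x⟫_ℂ • f n) (S x)) (T : H →L[ℂ] H) (e : I ≃ I)
    (hT : ∀ n, T (f n) = f (e n)) (x : H) :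
    T (S (T.adjoint x)) = S x := by
  have hmap := (hS (T.adjoint x)).mapL T
  have hterm : (fun n => T (⟪f n, T.adjoint x⟫_ℂ • f n)) =
      (fun n => ⟪f n, x⟫_ℂ • f n) ∘ e := by
    ext n
    simp [ContinuousLinearMap.adjoint_inner_right, hT]
  rw [hterm, e.hasSum_iff] at hmap
  exact hmap.unique (hS x)

theorem inner_symm_map_map_of_conj_adjoint {S T : H ≃L[ℂ] H}
    (hST : ∀ x, T (S ((T : H →L[ℂ] H).adjoint x)) = S x) (a b : H) :
    ⟪T a, S.symm (T b)⟫_ℂ = ⟪a, S.symm b⟫_ℂ := by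
  have hadj : (T : H →L[ℂ] H).adjoint (S.symm (T b)) = S.symm b := by
    rw [S.eq_symm_apply]
    apply T.injective
    simpa using hST (S.symm (T b))
  rw [← hadj, ContinuousLinearMap.adjoint_inner_right]
  rfl

end FrameOperator

theorem stmt11_general {H : Type} [NormedAddCommGroup H] [InnerProductSpace ℂ H]
    [CompleteSpace H]
    (f : ℤ → H)
    (S : H ≃L[ℂ] H)
    (hS : ∀ x : H, HasSum (fun n : ℤ => (inner ℂ (f n) x : ℂ) • f n) (S x))
    (T : H ≃L[ℂ] H) (hT : ∀ n : ℤ, f n = (T ^ n) (f 0)) :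
    ∀ i : ℤ, {c : ℂ | ∃ j : ℤ, c = inner ℂ (f i) (S.symm (f j))} =
      {c : ℂ | ∃ j : ℤ, c = inner ℂ (f 0) (S.symm (f j))} := by
  have hshift : ∀ n, T (f n) = f (Equiv.addRight 1 n) := fun n => by
    rw [Equiv.coe_addRight, hT n, hT (n + 1), add_comm, zpow_add, zpow_one]
    rfl
  have hT_mem : T ∈ ContinuousLinearEquiv.stabilizer (fun a b => ⟪a, S.symm b⟫_ℂ) :=
    inner_symm_map_map_of_conj_adjoint
      (frameOperator_conj_adjoint_of_shift hS (T : H →L[ℂ] H) _ hshift)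
  intro i
  have key : ∀ j, ⟪f i, S.symm (f (j + i))⟫_ℂ = ⟪f 0, S.symm (f j)⟫_ℂ := fun j => by
    rw [hT i, hT (j + i), add_comm, zpow_add]
    rw [show (T ^ i * T ^ j) (f 0) = (T ^ i) (f j) by rw [hT j]; rfl]
    exact Subgroup.zpow_mem _ hT_mem i _ _
  ext c
  constructor
  · rintro ⟨j, rfl⟩
    exact ⟨j - i, by rw [← key, sub_add_cancel]⟩
  · rintro ⟨j, rfl⟩
    exact ⟨j + i, (key j).symm⟩

theorem stmt11 {H : Type} [NormedAddCommGroup H] [InnerProductSpace ℂ H]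
    [CompleteSpace H] [TopologicalSpace.SeparableSpace H]
    (f : ℤ → H) (hframe : ∃ A B : ℝ, IsFrame f A B)
    (S : H ≃L[ℂ] H)
    (hS : ∀ x : H, HasSum (fun n : ℤ => (inner ℂ (f n) x : ℂ) • f n) (S x))
    (T : H ≃L[ℂ] H) (hT : ∀ n : ℤ, f n = (T ^ n) (f 0)) :
    ∀ i : ℤ, {c : ℂ | ∃ j : ℤ, c = inner ℂ (f i) (S.symm (f j))} =
      {c : ℂ | ∃ j : ℤ, c = inner ℂ (f 0) (S.symm (f j))} :=
  stmt11_general f S hS T hT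
end
end

section
/- Let (f_n)_{n∈ℤ} be a frame of H with frame operator S, and suppose f_n = Tⁿ f_0 for all n ∈ ℤ with T ∈ GL(H). Then the number ⟨f_n, S⁻¹ f_n⟩ is constant in n: ⟨f_n, S⁻¹ f_n⟩ = ⟨f_0, S⁻¹ f_0⟩ for all n ∈ ℤ. -/
/-!
Since `T` shifts the frame, `T f_n = f_{n+1}`, reindexing the series defining the frame operator
gives `T S T* = S`, hence `T* S⁻¹ T = S⁻¹` and `⟪T x, S⁻¹ T x⟫ = ⟪x, S⁻¹ x⟫`. The quantity
`⟪f_n, S⁻¹ f_n⟫` is therefore `1`-periodic in `n`.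
-/

noncomputable section

open scoped InnerProductSpace

section

variable {𝕜 H : Type*} [RCLike 𝕜] [NormedAddCommGroup H] [InnerProductSpace 𝕜 H] [CompleteSpace H]

theorem frameOperator_comp_adjoint_of_map_eq {I : Type*} {f : I → H} {S : H →L[𝕜] H}
    (hS : ∀ x, HasSum (fun i => ⟪f i, x⟫_𝕜 • f i) (S x))
    (T : H →L[𝕜] H) (e : I ≃ I) (hT : ∀ i, T (f i) = f (e i)) (x : H) :
    T (S (T.adjoint x)) = S x := by
  have hmap := (hS (T.adjoint x)).mapL T
  simp only [map_smul, ContinuousLinearMap.adjoint_inner_right, hT] at hmap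
  exact ((e.hasSum_iff (f := fun i => ⟪f i, x⟫_𝕜 • f i)).mp hmap).unique (hS x)

theorem inner_map_symm_map_eq_of_comp_adjoint {S T : H ≃L[𝕜] H}
    (hconj : ∀ x, T (S ((T : H →L[𝕜] H).adjoint x)) = S x) (x : H) :
    ⟪T x, S.symm (T x)⟫_𝕜 = ⟪x, S.symm x⟫_𝕜 := by
  have hsymm : (T : H →L[𝕜] H).adjoint (S.symm (T x)) = S.symm x := by
    apply S.injective
    apply T.injective
    rw [hconj, S.apply_symm_apply, S.apply_symm_apply]
  rw [← ContinuousLinearEquiv.coe_coe T, ← ContinuousLinearMap.adjoint_inner_right]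
  exact congrArg _ hsymm

end

theorem stmt12_general {H : Type} [NormedAddCommGroup H] [InnerProductSpace ℂ H]
    [CompleteSpace H]
    (f : ℤ → H)
    (S : H ≃L[ℂ] H)
    (hS : ∀ x : H, HasSum (fun n : ℤ => (inner ℂ (f n) x : ℂ) • f n) (S x))
    (T : H ≃L[ℂ] H) (hT : ∀ n : ℤ, f n = (T ^ n) (f 0)) :
    ∀ n : ℤ, (inner ℂ (f n) (S.symm (f n)) : ℂ) = inner ℂ (f 0) (S.symm (f 0)) := by
  have hshift : ∀ n : ℤ, T (f n) = f (n + 1) := fun n => by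
    rw [hT n, hT (n + 1), add_comm, zpow_one_add]
    rfl
  have hconj : ∀ x, T (S ((T : H →L[ℂ] H).adjoint x)) = S x :=
    frameOperator_comp_adjoint_of_map_eq (S := (S : H →L[ℂ] H)) hS T (Equiv.addRight 1) hshift
  have hperiodic : Function.Periodic (fun n : ℤ => ⟪f n, S.symm (f n)⟫_ℂ) 1 := fun n => by
    simp only [← hshift]
    exact inner_map_symm_map_eq_of_comp_adjoint hconj (f n)
  intro n
  simpa using hperiodic.int_mul_eq n

theorem stmt12 {H : Type} [NormedAddCommGroup H] [InnerProductSpace ℂ H]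
    [CompleteSpace H] [TopologicalSpace.SeparableSpace H]
    (f : ℤ → H) (hframe : ∃ A B : ℝ, IsFrame f A B)
    (S : H ≃L[ℂ] H)
    (hS : ∀ x : H, HasSum (fun n : ℤ => (inner ℂ (f n) x : ℂ) • f n) (S x))
    (T : H ≃L[ℂ] H) (hT : ∀ n : ℤ, f n = (T ^ n) (f 0)) :
    ∀ n : ℤ, (inner ℂ (f n) (S.symm (f n)) : ℂ) = inner ℂ (f 0) (S.symm (f 0)) :=
  stmt12_general f S hS T hT
end
end

section
/- Let (f_n)_{n∈ℤ} be a tight frame of H with f_n = Tⁿ f_0 for all n ∈ ℤ, where T ∈ GL(H). Then the frame is norm-constant: ‖f_n‖ = ‖f_0‖ for all n ∈ ℤ. -/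
noncomputable section

open scoped InnerProductSpace

/-!
Since `f (n + 1) = T (f n)`, the frame coefficients of `T† x` are those of `x`, shifted by one;
tightness therefore makes `T†` an isometry. An invertible operator with isometric adjoint is
unitary, so every power of `T` is an isometry and `‖f n‖ = ‖Tⁿ (f 0)‖ = ‖f 0‖`.
-/

open ContinuousLinearMap

theorem IsTightFrame.norm_adjoint_apply_s13 {H : Type} [NormedAddCommGroup H] [InnerProductSpace ℂ H]
    [CompleteSpace H] {I : Type} {f : I → H} {A : ℝ} (hf : IsTightFrame f A) {T : H →L[ℂ] H}
    (e : I ≃ I) (hTf : ∀ i, T (f i) = f (e i)) (x : H) : ‖adjoint T x‖ = ‖x‖ := by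
  obtain ⟨hA, hsum⟩ := hf
  have hcoeff : (fun i => ‖⟪adjoint T x, f i⟫_ℂ‖ ^ 2) = (fun i => ‖⟪x, f i⟫_ℂ‖ ^ 2) ∘ e := by
    ext i
    rw [adjoint_inner_left, hTf, Function.comp_apply]
  have hx : HasSum (fun i => ‖⟪adjoint T x, f i⟫_ℂ‖ ^ 2) (A * ‖x‖ ^ 2) :=
    hcoeff ▸ e.hasSum_iff.mpr (hsum x)
  have hsq : ‖adjoint T x‖ ^ 2 = ‖x‖ ^ 2 :=
    mul_left_cancel₀ hA.ne' ((hsum (adjoint T x)).unique hx)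
  exact (pow_left_inj₀ (norm_nonneg _) (norm_nonneg _) two_ne_zero).mp hsq

theorem ContinuousLinearEquiv.norm_map_of_norm_adjoint_map_s13 {𝕜 H : Type*} [RCLike 𝕜]
    [NormedAddCommGroup H] [InnerProductSpace 𝕜 H] [CompleteSpace H] (T : H ≃L[𝕜] H)
    (hT : ∀ x, ‖adjoint (T : H →L[𝕜] H) x‖ = ‖x‖) (x : H) : ‖T x‖ = ‖x‖ := by
  have hunit : IsUnit (T : H →L[𝕜] H) := T.toUnit.isUnit
  have hmul : (T : H →L[𝕜] H) * star (T : H →L[𝕜] H) = 1 := by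
    simpa [star_eq_adjoint, mul_def] using (norm_map_iff_adjoint_comp_self _).mp hT
  exact norm_map_of_mem_unitary (hunit.mem_unitary_of_mul_star_self hmul) x

theorem ContinuousLinearEquiv.norm_zpow_apply {𝕜 E : Type*} [NormedRing 𝕜]
    [SeminormedAddCommGroup E] [Module 𝕜 E] {T : E ≃L[𝕜] E} (hT : ∀ x, ‖T x‖ = ‖x‖)
    (n : ℤ) (x : E) : ‖(T ^ n) x‖ = ‖x‖ := by
  let isometries : Subgroup (E ≃L[𝕜] E) :=
    { carrier := {S | ∀ x, ‖S x‖ = ‖x‖}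
      mul_mem' := fun hS hS' x => (hS _).trans (hS' x)
      one_mem' := fun _ => rfl
      inv_mem' := fun {S} hS x => by
        change ‖S.symm x‖ = ‖x‖
        simpa using (hS (S.symm x)).symm }
  exact isometries.zpow_mem hT n x

theorem stmt13_general {H : Type} [NormedAddCommGroup H] [InnerProductSpace ℂ H]
    [CompleteSpace H]
    (f : ℤ → H) (A : ℝ) (hframe : IsTightFrame f A)
    (T : H ≃L[ℂ] H) (hT : ∀ n : ℤ, f n = (T ^ n) (f 0)) :
    ∀ n : ℤ, ‖f n‖ = ‖f 0‖ := by
  have hshift : ∀ n, (T : H →L[ℂ] H) (f n) = f (Equiv.addRight 1 n) := by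
    intro n
    rw [hT n, Equiv.coe_addRight, hT (n + 1), add_comm, zpow_add, zpow_one]
    rfl
  have hTiso : ∀ x, ‖T x‖ = ‖x‖ :=
    T.norm_map_of_norm_adjoint_map_s13 (hframe.norm_adjoint_apply_s13 _ hshift)
  intro n
  rw [hT n, ContinuousLinearEquiv.norm_zpow_apply hTiso]

theorem stmt13 {H : Type} [NormedAddCommGroup H] [InnerProductSpace ℂ H]
    [CompleteSpace H] [TopologicalSpace.SeparableSpace H]
    (f : ℤ → H) (A : ℝ) (hframe : IsTightFrame f A)
    (T : H ≃L[ℂ] H) (hT : ∀ n : ℤ, f n = (T ^ n) (f 0)) :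
    ∀ n : ℤ, ‖f n‖ = ‖f 0‖ :=
  stmt13_general f A hframe T hT
end
end

section
/- Let (f_n)_{n∈ℤ} be a linearly independent overcomplete frame of H with frame operator S. Suppose there is a map κ : ℤ → ℤ with infinite range (so the frame is the disjoint union of the infinitely many nonempty subfamilies F_k = { f_n : κ(n) = k }) such that ⟨f_i, S⁻¹ f_j⟩ = 0 whenever κ(i) ≠ κ(j). Then, regardless of the ordering over ℤ, the frame is not generated by an operator in GL(H): for every bijection σ : ℤ → ℤ and every T ∈ GL(H) it is not the case that f_{σ(n)} = Tⁿ f_{σ(0)} for all n ∈ ℤ. -/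
noncomputable section

open scoped InnerProductSpace

/-! If `f ∘ σ` is the `T`-orbit of `g`, then `T` permutes the frame, so `T† S⁻¹ T = S⁻¹` and the
entries `⟪f (σ m), S⁻¹ f (σ n)⟫` depend only on `n - m`. A nonzero entry at distance `d ≠ 0` would
make `κ ∘ σ` `d`-periodic, hence of finite range. So the frame is biorthogonal to its canonical
dual `S⁻¹ f`, with nonzero diagonal because `S` is positive definite, and pairing a relation
`∑ cₙ fₙ = 0` with `S⁻¹ f_j` gives `c_j = 0`. -/

open Function

lemma Function.Periodic.finite_range_of_ne_zero {α : Type*} {φ : ℤ → α} {d : ℤ}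
    (hφ : Periodic φ d) (hd : d ≠ 0) : (Set.range φ).Finite := by
  wlog hpos : 0 < d generalizing d
  · exact this hφ.neg (neg_ne_zero.mpr hd) (by omega)
  refine ((Set.finite_Ico 0 d).image φ).subset ?_
  rintro _ ⟨x, rfl⟩
  obtain ⟨y, hy, hxy⟩ := hφ.exists_mem_Ico₀ hpos x
  exact ⟨y, hy, hxy.symm⟩

section FrameOperator

variable {H : Type} [NormedAddCommGroup H] [InnerProductSpace ℂ H] {ι : Type}

-- An operator permuting the family satisfies `U S U† = S`, equivalently `U† S⁻¹ U = S⁻¹`.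
lemma inner_map_symm_map_of_perm [CompleteSpace H] {e : ι → H} {S : H ≃L[ℂ] H}
    (hS : ∀ x, HasSum (fun i => ⟪e i, x⟫_ℂ • e i) (S x))
    {U : H ≃L[ℂ] H} (π : ι ≃ ι) (hU : ∀ i, U (e i) = e (π i)) (p q : H) :
    ⟪U p, S.symm (U q)⟫_ℂ = ⟪p, S.symm q⟫_ℂ := by
  set V : H →L[ℂ] H := (U : H →L[ℂ] H)
  have hconj : ∀ x, U (S (V.adjoint x)) = S x := by
    intro x
    have h := (hS (V.adjoint x)).mapL V
    simp only [ContinuousLinearMap.adjoint_inner_right, map_smul, V,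
      ContinuousLinearEquiv.coe_coe, hU] at h
    exact h.unique (π.hasSum_iff.mpr (hS x))
  have hadj : V.adjoint (S.symm (U q)) = S.symm q := by
    rw [S.eq_symm_apply]
    apply U.injective
    rw [hconj, S.apply_symm_apply]
  rw [← hadj, ContinuousLinearMap.adjoint_inner_right]
  rfl

lemma IsFrame.inner_self_apply_ne_zero {f : ι → H} {A B : ℝ} (hf : IsFrame f A B)
    {S : H → H} (hS : ∀ x, HasSum (fun i => ⟪f i, x⟫_ℂ • f i) (S x)) {x : H} (hx : x ≠ 0) :
    ⟪x, S x⟫_ℂ ≠ 0 := by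
  obtain ⟨hA, -, hfx⟩ := hf
  obtain ⟨hsum, hlow, -⟩ := hfx x
  have hterm : ∀ i, innerSL ℂ x (⟪f i, x⟫_ℂ • f i) = ((‖⟪x, f i⟫_ℂ‖ ^ 2 : ℝ) : ℂ) := fun i => by
    rw [innerSL_apply_apply, inner_smul_right, ← inner_conj_symm x (f i), Complex.mul_conj',
      RCLike.norm_conj]
    push_cast
    rfl
  have h : HasSum (fun i => ((‖⟪x, f i⟫_ℂ‖ ^ 2 : ℝ) : ℂ)) ⟪x, S x⟫_ℂ := by
    have h := (hS x).mapL (innerSL ℂ x)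
    rw [funext hterm] at h
    exact h
  rw [h.unique (Complex.hasSum_ofReal.mpr hsum.hasSum)]
  have : 0 < A * ‖x‖ ^ 2 := by positivity
  exact_mod_cast (this.trans_le hlow).ne'

lemma coeff_eq_zero_of_hasSum_zero {f : ι → H} {c : ι → ℂ} (hc : HasSum (fun i => c i • f i) 0)
    {y : H} {j : ι} (hy : ∀ i ≠ j, ⟪f i, y⟫_ℂ = 0) (hj : ⟪f j, y⟫_ℂ ≠ 0) : c j = 0 := by
  have h := hc.mapL (innerSL ℂ y)
  simp only [innerSL_apply_apply, inner_smul_right, map_zero] at h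
  have hsingle := hasSum_single (f := fun i => c i * ⟪y, f i⟫_ℂ) j
    fun i hi => by rw [inner_eq_zero_symm.mp (hy i hi), mul_zero]
  exact (mul_eq_zero.mp (hsingle.unique h)).resolve_right fun h0 => hj (inner_eq_zero_symm.mp h0)

end FrameOperator

theorem stmt15_general {H : Type} [NormedAddCommGroup H] [InnerProductSpace ℂ H]
    [CompleteSpace H]
    (f : ℤ → H) (hframe : ∃ A B : ℝ, IsFrame f A B)
    (hli : LinearIndependent ℂ f)
    (hover : ∃ c : lp (fun _ : ℤ => ℂ) 2, c ≠ 0 ∧ HasSum (fun n : ℤ => c n • f n) 0)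
    (S : H ≃L[ℂ] H)
    (hS : ∀ x : H, HasSum (fun n : ℤ => (inner ℂ (f n) x : ℂ) • f n) (S x))
    (κ : ℤ → ℤ) (hκ : (Set.range κ).Infinite)
    (horth : ∀ i j : ℤ, κ i ≠ κ j → (inner ℂ (f i) (S.symm (f j)) : ℂ) = 0) :
    ∀ (σ : ℤ ≃ ℤ) (T : H ≃L[ℂ] H), ¬ (∀ n : ℤ, f (σ n) = (T ^ n) (f (σ 0))) := by
  intro σ T horb
  obtain ⟨A, B, hf⟩ := hframe
  set g := f (σ 0)
  have hSorb : ∀ x, HasSum (fun n : ℤ => ⟪(T ^ n) g, x⟫_ℂ • (T ^ n) g) (S x) := fun x => by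
    simpa only [comp_def, horb] using σ.hasSum_iff.mpr (hS x)
  have toeplitz : ∀ m n : ℤ,
      ⟪f (σ m), S.symm (f (σ n))⟫_ℂ = ⟪g, S.symm ((T ^ (n - m)) g)⟫_ℂ := by
    intro m n
    have hshift : ∀ k : ℤ, (T ^ m) ((T ^ k) g) = (T ^ (m + k)) g := fun k => by
      rw [zpow_add]; rfl
    have hn : (T ^ n) g = (T ^ m) ((T ^ (n - m)) g) := by rw [hshift, add_sub_cancel]
    rw [horb m, horb n, hn, inner_map_symm_map_of_perm hSorb (Equiv.addLeft m) hshift]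
  have hoff : ∀ d : ℤ, d ≠ 0 → ⟪g, S.symm ((T ^ d) g)⟫_ℂ = 0 := by
    intro d hd
    by_contra hne
    have hper : Periodic (κ ∘ σ) d := fun m => by
      by_contra hm
      exact hne (by simpa [toeplitz] using horth _ _ (Ne.symm hm))
    exact hκ (by simpa using hper.finite_range_of_ne_zero hd)
  have hbiorth : ∀ i j, i ≠ j → ⟪f i, S.symm (f j)⟫_ℂ = 0 := by
    intro i j hij
    obtain ⟨m, rfl⟩ := σ.surjective i
    obtain ⟨n, rfl⟩ := σ.surjective j
    exact (toeplitz m n).trans (hoff _ (sub_ne_zero.mpr fun h => hij (congrArg σ h.symm)))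
  have hdiag : ∀ j, ⟪f j, S.symm (f j)⟫_ℂ ≠ 0 := by
    intro j h
    refine hf.inner_self_apply_ne_zero hS (x := S.symm (f j)) ?_ ?_
    · simpa using hli.ne_zero j
    · rwa [S.apply_symm_apply, inner_eq_zero_symm]
  obtain ⟨c, hc0, hc⟩ := hover
  exact hc0 (lp.ext (funext fun j =>
    coeff_eq_zero_of_hasSum_zero hc (fun i hi => hbiorth i j hi) (hdiag j)))

theorem stmt15 {H : Type} [NormedAddCommGroup H] [InnerProductSpace ℂ H]
    [CompleteSpace H] [TopologicalSpace.SeparableSpace H]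
    (f : ℤ → H) (hframe : ∃ A B : ℝ, IsFrame f A B)
    (hli : LinearIndependent ℂ f)
    (hover : ∃ c : lp (fun _ : ℤ => ℂ) 2, c ≠ 0 ∧ HasSum (fun n : ℤ => c n • f n) 0)
    (S : H ≃L[ℂ] H)
    (hS : ∀ x : H, HasSum (fun n : ℤ => (inner ℂ (f n) x : ℂ) • f n) (S x))
    (κ : ℤ → ℤ) (hκ : (Set.range κ).Infinite)
    (horth : ∀ i j : ℤ, κ i ≠ κ j → (inner ℂ (f i) (S.symm (f j)) : ℂ) = 0) :
    ∀ (σ : ℤ ≃ ℤ) (T : H ≃L[ℂ] H), ¬ (∀ n : ℤ, f (σ n) = (T ^ n) (f (σ 0))) :=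
  stmt15_general f hframe hli hover S hS κ hκ horth
end
end

section
/- Let G(g,a,b) = (g_{m,n})_{(m,n)∈ℤ×ℤ} be an overcomplete Gabor frame of L²(ℝ) whose window g is supported in an interval of length a: g(x) = 0 for almost every x ∉ [c, c+a], for some c ∈ ℝ. Then, regardless of the ordering over ℤ, G(g,a,b) is not generated by an operator in GL(L²(ℝ)): for every bijection σ : ℤ → ℤ×ℤ and every T ∈ GL(L²(ℝ)) it is not the case that g_{σ(n)} = Tⁿ g_{σ(0)} for all n ∈ ℤ. -/
/-!
Let `K` be the closure of the kernel of the synthesis map `d ↦ ∑ₖ dₖ g_{σ k}` on `ℓ²(ℤ)`.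
Since `T g_{σ k} = g_{σ (k + 1)}`, `K` is invariant under all shifts of `ℓ²(ℤ)`. The windows
`g_{m,n}` with different `n` live on the disjoint intervals `(c₀ + n a, c₀ + (n + 1) a)`, so
multiplying a vanishing synthesis by the indicator of one interval shows that `K` is also
invariant under restriction to each fibre `{k | (σ k).2 = n}`. The orthogonal projection onto `K`
therefore has a Toeplitz matrix vanishing between different fibres; a nonzero off-diagonal entry
would make the surjection `k ↦ (σ k).2` periodic, which is impossible. So the projection is
scalar and `K` is `0` or `ℓ²(ℤ)`. Overcompleteness excludes `0`, and `ℓ²(ℤ)` is excluded because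
the frame coefficients of any `f ≠ 0` form a nonzero vector orthogonal to `K`.
-/

noncomputable section

open MeasureTheory
open scoped InnerProductSpace

open scoped lp

theorem Function.Periodic.finite_range_of_int {β : Type*} {f : ℤ → β} {c : ℤ}
    (h : Function.Periodic f c) (hc : c ≠ 0) : (Set.range f).Finite := by
  wlog hpos : 0 < c generalizing c
  · exact this h.neg (neg_ne_zero.2 hc) (by omega)
  refine ((Set.finite_Ico 0 c).image f).subset ?_
  rintro _ ⟨x, rfl⟩
  obtain ⟨y, hy, hxy⟩ := h.exists_mem_Ico₀ hpos x
  exact ⟨y, hy, hxy.symm⟩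

namespace lp

variable {𝕜 : Type*} [RCLike 𝕜] {ι ι' : Type*}

def reindex (e : ι ≃ ι') : ℓ²(ι', 𝕜) ≃ₗᵢ[𝕜] ℓ²(ι, 𝕜) :=
  LinearEquiv.isometryOfInner
    { toFun x := ⟨x ∘ e, memℓp_gen <| (e.summable_iff (f := fun i => ‖x i‖ ^ _)).2 <|
        (lp.memℓp x).summable (by norm_num)⟩
      invFun x := ⟨x ∘ e.symm, memℓp_gen <| (e.symm.summable_iff (f := fun i => ‖x i‖ ^ _)).2 <|
        (lp.memℓp x).summable (by norm_num)⟩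
      map_add' _ _ := rfl
      map_smul' _ _ := rfl
      left_inv x := by ext; simp
      right_inv x := by ext; simp }
    fun x y => by
      simp only [lp.inner_eq_tsum]
      exact e.tsum_eq fun i => ⟪x i, y i⟫_𝕜

@[simp] theorem reindex_apply (e : ι ≃ ι') (x : ℓ²(ι', 𝕜)) (i : ι) : reindex e x i = x (e i) := rfl

@[simp] theorem reindex_symm (e : ι ≃ ι') : (reindex (𝕜 := 𝕜) e).symm = reindex e.symm := rfl

theorem reindex_single [DecidableEq ι] [DecidableEq ι'] (e : ι ≃ ι') (i : ι') (a : 𝕜) :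
    reindex e (lp.single 2 i a) = lp.single 2 (e.symm i) a := by
  ext j
  simp [lp.single_apply, Pi.single_apply, Equiv.eq_symm_apply]

def indicatorCLM (s : Set ι) : ℓ²(ι, 𝕜) →L[𝕜] ℓ²(ι, 𝕜) :=
  LinearMap.mkContinuous
    { toFun x := ⟨s.indicator x, (lp.memℓp x).mono' fun i => norm_indicator_le_norm_self x i⟩
      map_add' x y := by ext i; exact congrFun (Set.indicator_add' s _ _) i
      map_smul' c x := by ext i; exact Set.indicator_const_smul_apply s c _ i }
    1 fun x => by
      rw [one_mul]
      exact lp.norm_mono (by norm_num) fun i => norm_indicator_le_norm_self x i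

@[simp] theorem indicatorCLM_apply (s : Set ι) (x : ℓ²(ι, 𝕜)) (i : ι) :
    indicatorCLM s x i = s.indicator x i := rfl

theorem inner_indicatorCLM_left (s : Set ι) (x y : ℓ²(ι, 𝕜)) :
    ⟪indicatorCLM s x, y⟫_𝕜 = ⟪x, indicatorCLM s y⟫_𝕜 := by
  simp only [lp.inner_eq_tsum, indicatorCLM_apply]
  congr 1
  ext i
  by_cases hi : i ∈ s <;> simp [hi]

theorem indicatorCLM_single_of_mem [DecidableEq ι] {s : Set ι} {i : ι} (hi : i ∈ s) (a : 𝕜) :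
    indicatorCLM s (lp.single 2 i a) = lp.single 2 i a := by
  ext j
  by_cases hj : j = i
  · subst hj; simp [hi]
  · simp [lp.single_apply, hj]

end lp

theorem Submodule.starProjection_apply_comm {𝕜 E : Type*} [RCLike 𝕜] [NormedAddCommGroup E]
    [InnerProductSpace 𝕜 E] {K : Submodule 𝕜 E} [K.HasOrthogonalProjection] {T S : E →ₗ[𝕜] E}
    (hTS : ∀ x y, ⟪T x, y⟫_𝕜 = ⟪x, S y⟫_𝕜) (hT : ∀ x ∈ K, T x ∈ K) (hS : ∀ x ∈ K, S x ∈ K)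
    (x : E) : K.starProjection (T x) = T (K.starProjection x) :=
  K.eq_starProjection_of_mem_of_inner_eq_zero (hT _ (K.starProjection_apply_mem x))
    fun w hw => by rw [← map_sub, hTS]; exact K.starProjection_inner_eq_zero x (S w) (hS w hw)

section ShiftInvariant

variable {𝕜 : Type*} [RCLike 𝕜] {β : Type*}

theorem ContinuousLinearMap.exists_eq_smul_id_of_commute_shift_indicator
    (A : ℓ²(ℤ, 𝕜) →L[𝕜] ℓ²(ℤ, 𝕜))
    (hshift : ∀ j x, A (lp.reindex (Equiv.addRight j) x) = lp.reindex (Equiv.addRight j) (A x))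
    {s : ℤ → β} (hs : (Set.range s).Infinite)
    (hloc : ∀ n x, A (lp.indicatorCLM (s ⁻¹' {n}) x) = lp.indicatorCLM (s ⁻¹' {n}) (A x)) :
    ∃ c : 𝕜, A = c • ContinuousLinearMap.id 𝕜 _ := by
  set e : ℤ → ℓ²(ℤ, 𝕜) := fun k => lp.single 2 k 1
  have toeplitz : ∀ j k, A (e k) j = A (e (k - j)) 0 := fun j k => by
    have := congr($(hshift j (e k)) 0)
    simp only [e, lp.reindex_single, Equiv.addRight_symm] at this
    simpa [sub_eq_add_neg] using this.symm
  have vanish_off_block : ∀ j k, s j ≠ s k → A (e k) j = 0 := fun j k hjk => by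
    have := congr($(hloc (s k) (e k)) j)
    simp only [e] at this ⊢
    rwa [lp.indicatorCLM_single_of_mem (s := s ⁻¹' {s k}) rfl, lp.indicatorCLM_apply,
      Set.indicator_of_notMem (s := s ⁻¹' {s k}) hjk] at this
  have vanish_off_diag : ∀ t ≠ 0, A (e t) 0 = 0 := fun t ht => by
    by_contra hne
    refine hs (Function.Periodic.finite_range_of_int (c := t) (fun j => ?_) ht)
    by_contra hper
    exact hne (by
      simpa using (toeplitz j (j + t)).symm.trans (vanish_off_block j (j + t) (Ne.symm hper)))
  refine ⟨A (e 0) 0, lp.ext_continuousLinearMap (by norm_num) fun k => ?_⟩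
  refine ContinuousLinearMap.ext_ring ?_
  ext j
  change A (e k) j = (A (e 0) 0 • e k) j
  rw [toeplitz, lp.coeFn_smul, Pi.smul_apply]
  by_cases hjk : j = k
  · simp [e, hjk]
  · simp [e, lp.single_apply, hjk, vanish_off_diag (k - j) (sub_ne_zero.2 (Ne.symm hjk))]

theorem Submodule.eq_bot_or_eq_top_of_shift_invariant (K : Submodule 𝕜 ℓ²(ℤ, 𝕜))
    [K.HasOrthogonalProjection]
    (hshift : ∀ j, ∀ x ∈ K, lp.reindex (Equiv.addRight j) x ∈ K)
    {s : ℤ → β} (hs : (Set.range s).Infinite)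
    (hloc : ∀ n, ∀ x ∈ K, lp.indicatorCLM (s ⁻¹' {n}) x ∈ K) : K = ⊥ ∨ K = ⊤ := by
  have commute_shift (j : ℤ) := K.starProjection_apply_comm
    (T := (lp.reindex (Equiv.addRight j)).toLinearMap)
    (S := (lp.reindex (Equiv.addRight j)).symm.toLinearMap)
    (LinearIsometryEquiv.inner_map_eq_flip _) (hshift j)
    (by simpa [Equiv.addRight_symm] using hshift (-j))
  have commute_indicator (n : β) := K.starProjection_apply_comm
    (T := (lp.indicatorCLM (s ⁻¹' {n})).toLinearMap)
    (S := (lp.indicatorCLM (s ⁻¹' {n})).toLinearMap)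
    (lp.inner_indicatorCLM_left _) (hloc n) (hloc n)
  obtain ⟨c, hc⟩ := K.starProjection.exists_eq_smul_id_of_commute_shift_indicator commute_shift hs
    commute_indicator
  refine or_iff_not_imp_left.2 fun hK => ?_
  obtain ⟨x, hxK, hx0⟩ := (Submodule.ne_bot_iff K).1 hK
  have hc1 : c = 1 := by
    have := K.starProjection_eq_self_iff.2 hxK
    rw [hc] at this
    exact smul_left_injective 𝕜 hx0 (by simpa using this)
  rw [eq_top_iff]
  intro y _
  rw [← K.starProjection_eq_self_iff, hc, hc1]
  simp

end ShiftInvariant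

section SynthesisKernel

variable {𝕜 : Type*} [RCLike 𝕜] {ι ι' E F : Type*} [NormedAddCommGroup E] [NormedSpace 𝕜 E]
  [NormedAddCommGroup F] [NormedSpace 𝕜 F] {v : ι → E} {d : ℓ²(ι, 𝕜)}

def synthesisKernel (v : ι → E) : Submodule 𝕜 ℓ²(ι, 𝕜) where
  carrier := {d | HasSum (fun i => d i • v i) 0}
  add_mem' {d d'} hd hd' := by simpa [add_smul] using hd.add hd'
  zero_mem' := by simp
  smul_mem' c d hd := by simpa [smul_smul] using hd.const_smul c

theorem mem_synthesisKernel : d ∈ synthesisKernel v ↔ HasSum (fun i => d i • v i) 0 := Iff.rfl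

theorem reindex_mem_synthesisKernel_comp_iff (e : ι' ≃ ι) :
    lp.reindex e d ∈ synthesisKernel (v ∘ e) ↔ d ∈ synthesisKernel v :=
  e.hasSum_iff (f := fun i => d i • v i)

theorem mem_synthesisKernel_comp (hd : d ∈ synthesisKernel v) (L : E →L[𝕜] F) :
    d ∈ synthesisKernel (L ∘ v) := by
  simpa [mem_synthesisKernel] using L.hasSum hd

theorem indicatorCLM_mem_synthesisKernel_iff (s : Set ι) :
    lp.indicatorCLM s d ∈ synthesisKernel v ↔ d ∈ synthesisKernel (s.indicator v) := by
  simp only [mem_synthesisKernel, lp.indicatorCLM_apply]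
  congr! 2 with i
  by_cases hi : i ∈ s <;> simp [hi]

theorem reindex_mem_synthesisKernel (L : E →L[𝕜] E) (e : ι ≃ ι) (hL : ∀ i, L (v (e i)) = v i)
    (hd : d ∈ synthesisKernel v) : lp.reindex e d ∈ synthesisKernel v := by
  have := (reindex_mem_synthesisKernel_comp_iff e).2 (mem_synthesisKernel_comp hd L)
  rwa [show (L ∘ v) ∘ e = v from funext hL] at this

theorem indicatorCLM_mem_synthesisKernel (L : E →L[𝕜] E) (s : Set ι)
    (hL : ∀ i, L (v i) = s.indicator v i) (hd : d ∈ synthesisKernel v) :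
    lp.indicatorCLM s d ∈ synthesisKernel v := by
  rw [indicatorCLM_mem_synthesisKernel_iff, ← show L ∘ v = s.indicator v from funext hL]
  exact mem_synthesisKernel_comp hd L

end SynthesisKernel

theorem IsFrame.comp_equiv {H : Type} [NormedAddCommGroup H] [InnerProductSpace ℂ H] {I J : Type}
    {v : I → H} {A B : ℝ} (hv : IsFrame v A B) (e : J ≃ I) : IsFrame (v ∘ e) A B := by
  obtain ⟨hA, hB, hv⟩ := hv
  refine ⟨hA, hB, fun x => ?_⟩
  obtain ⟨hsum, hlow, hup⟩ := hv x
  refine ⟨(e.summable_iff (f := fun i => ‖⟪x, v i⟫_ℂ‖ ^ 2)).2 hsum, ?_⟩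
  simpa only [Function.comp_apply, e.tsum_eq (fun i => ‖⟪x, v i⟫_ℂ‖ ^ 2)] using ⟨hlow, hup⟩

theorem IsFrame.topologicalClosure_synthesisKernel_ne_top {H : Type} [NormedAddCommGroup H]
    [InnerProductSpace ℂ H] [Nontrivial H] {I : Type} {v : I → H} {A B : ℝ} (hv : IsFrame v A B) :
    (synthesisKernel (𝕜 := ℂ) v).topologicalClosure ≠ ⊤ := by
  obtain ⟨hA, -, hv⟩ := hv
  obtain ⟨f, hf⟩ := exists_ne (0 : H)
  obtain ⟨hsum, hlow, -⟩ := hv f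
  let w : ℓ²(I, ℂ) := ⟨fun i => ⟪v i, f⟫_ℂ, memℓp_gen <| by
    simpa [norm_inner_symm (v _) f] using hsum⟩
  have hw : w ∈ (synthesisKernel (𝕜 := ℂ) v)ᗮ := by
    refine (Submodule.mem_orthogonal' _ _).2 fun d hd => ?_
    rw [lp.inner_eq_tsum]
    simpa [w, inner_smul_right, mul_comm] using ((innerSL ℂ f).hasSum hd).tsum_eq
  intro htop
  rw [← Submodule.orthogonal_closure, htop, Submodule.top_orthogonal_eq_bot,
    Submodule.mem_bot] at hw
  have hcoeff : ∀ i, ⟪f, v i⟫_ℂ = 0 := fun i => inner_eq_zero_symm.1 <| by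
    simpa [w] using congr($hw i)
  simp [hcoeff] at hlow
  exact (mul_pos hA (pow_pos (norm_pos_iff.2 hf) 2)).not_ge hlow

namespace MeasureTheory.Lp

open scoped ENNReal

variable {𝕜 α E : Type*} [RCLike 𝕜] {m : MeasurableSpace α} {μ : Measure α}
  [NormedAddCommGroup E] {p : ℝ≥0∞} {s : Set α}

theorem nontrivial_of_measure_ne_zero [Nontrivial E] (hp : p ≠ 0) (hs : MeasurableSet s)
    (hμs : μ s ≠ ∞) (hμs₀ : μ s ≠ 0) : Nontrivial (Lp E p μ) := by
  obtain ⟨c, hc⟩ := exists_ne (0 : E)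
  refine nontrivial_of_ne (indicatorConstLp p hs hμs c) 0 fun h => ?_
  have := congr(‖$h‖)
  rw [norm_indicatorConstLp' hp hμs₀, norm_zero] at this
  rcases mul_eq_zero.1 this with h | h
  · exact hc (norm_eq_zero.1 h)
  · exact (Real.rpow_pos_of_pos (ENNReal.toReal_pos hμs₀ hμs) _).ne' h

variable [NormedSpace 𝕜 E] [Fact (1 ≤ p)]

variable (𝕜) in
def indicatorCLM (hs : MeasurableSet s) (hμs : μ s ≠ ∞) : Lp E p μ →L[𝕜] Lp E p μ :=
  (ContinuousLinearMap.lsmul 𝕜 𝕜).holderL μ ∞ p p (indicatorConstLp ∞ hs hμs (1 : 𝕜))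

variable (𝕜) in
theorem coeFn_indicatorCLM (hs : MeasurableSet s) (hμs : μ s ≠ ∞) (f : Lp E p μ) :
    indicatorCLM 𝕜 hs hμs f =ᵐ[μ] s.indicator f := by
  filter_upwards [ContinuousLinearMap.coeFn_holder (r := p) (ContinuousLinearMap.lsmul 𝕜 𝕜)
    (indicatorConstLp ∞ hs hμs (1 : 𝕜)) f, indicatorConstLp_coeFn (p := ∞) (hs := hs) (hμs := hμs)
    (c := (1 : 𝕜))] with x hx h1
  by_cases hxs : x ∈ s <;> simp_all [indicatorCLM]

theorem indicatorCLM_eq_self (hs : MeasurableSet s) (hμs : μ s ≠ ∞) {f : Lp E p μ}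
    (hf : ∀ᵐ x ∂μ, x ∉ s → f x = 0) : indicatorCLM 𝕜 hs hμs f = f := by
  refine Lp.ext ?_
  filter_upwards [coeFn_indicatorCLM 𝕜 hs hμs f, hf] with x hx hfx
  by_cases hxs : x ∈ s <;> simp [hx, hxs, hfx]

theorem indicatorCLM_eq_zero (hs : MeasurableSet s) (hμs : μ s ≠ ∞) {f : Lp E p μ}
    (hf : ∀ᵐ x ∂μ, x ∈ s → f x = 0) : indicatorCLM 𝕜 hs hμs f = 0 := by
  refine Lp.ext ?_
  filter_upwards [coeFn_indicatorCLM 𝕜 hs hμs f, hf, Lp.coeFn_zero E p μ] with x hx hfx h0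
  rw [hx, h0]
  by_cases hxs : x ∈ s <;> simp [hxs, hfx]

theorem indicatorCLM_apply_eq_indicator_of_pairwise_disjoint {ι β : Type*} {J : β → Set α}
    (hJ : ∀ n, MeasurableSet (J n)) (hJμ : ∀ n, μ (J n) ≠ ∞)
    (hdisj : Pairwise (Function.onFun Disjoint J)) {v : ι → Lp E p μ}
    {s : ι → β} (hv : ∀ i, ∀ᵐ x ∂μ, x ∉ J (s i) → v i x = 0) (n : β) (i : ι) :
    indicatorCLM 𝕜 (hJ n) (hJμ n) (v i) = (s ⁻¹' {n}).indicator v i := by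
  by_cases hi : s i = n
  · subst hi
    rw [Set.indicator_of_mem (show i ∈ s ⁻¹' {s i} from rfl)]
    exact indicatorCLM_eq_self _ _ (hv i)
  · rw [Set.indicator_of_notMem (show i ∉ s ⁻¹' {n} from hi)]
    refine indicatorCLM_eq_zero _ _ ?_
    filter_upwards [hv i] with x hx hxn
    exact hx fun hxi => Set.disjoint_left.1 (hdisj hi) hxi hxn

end MeasureTheory.Lp

theorem ae_mul_translate_eq_zero_of_notMem_Ioo {R : Type*} [MulZeroClass R] {g : ℝ → R}
    {c₀ a : ℝ} (hg : ∀ᵐ x, x ∉ Set.Icc c₀ (c₀ + a) → g x = 0) (φ : ℝ → R) (n : ℤ) :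
    ∀ᵐ x, x ∉ Set.Ioo (c₀ + n • a) (c₀ + (n + 1) • a) → φ x * g (x - n * a) = 0 := by
  have hg' : ∀ᵐ x, x ∉ Set.Ioo c₀ (c₀ + a) → g x = 0 := by
    filter_upwards [hg, Ioo_ae_eq_Icc.mem_iff] with x hx hmem
    exact fun hx' => hx (mt hmem.2 hx')
  filter_upwards [(measurePreserving_sub_right volume (n * a)).quasiMeasurePreserving.ae hg']
    with x hx hxn
  rw [hx fun ⟨h₁, h₂⟩ => hxn ⟨by simp only [zsmul_eq_mul]; linarith,
    by simp only [zsmul_eq_mul]; push_cast; linarith⟩, mul_zero]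

theorem IsFrame.synthesisKernel_eq_bot_of_orbit_of_localized {H : Type} [NormedAddCommGroup H]
    [InnerProductSpace ℂ H] [Nontrivial H] {F : ℤ → H} {A B : ℝ} (hF : IsFrame F A B)
    (T : H ≃L[ℂ] H) (hT : ∀ n, F n = (T ^ n) (F 0)) {β : Type*} {s : ℤ → β}
    (hs : (Set.range s).Infinite) (D : β → H →L[ℂ] H)
    (hD : ∀ n k, D n (F k) = (s ⁻¹' {n}).indicator F k) : synthesisKernel (𝕜 := ℂ) F = ⊥ := by
  set K := (synthesisKernel (𝕜 := ℂ) F).topologicalClosure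
  have closure_invariant {f : ℓ²(ℤ, ℂ) → ℓ²(ℤ, ℂ)} (hf : Continuous f)
      (hN : ∀ d ∈ synthesisKernel F, f d ∈ synthesisKernel F) : ∀ d ∈ K, f d ∈ K :=
    fun _ hd => map_mem_closure hf hd hN
  have hshift (j : ℤ) := closure_invariant (lp.reindex (Equiv.addRight j)).continuous
    fun d => reindex_mem_synthesisKernel (T ^ (-j) : H ≃L[ℂ] H).toContinuousLinearMap _ fun k => by
      change (T ^ (-j)) (F (k + j)) = F k
      rw [hT (k + j), hT k]
      change (T ^ (-j) * T ^ (k + j)) (F 0) = _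
      rw [← zpow_add, show -j + (k + j) = k by ring]
  have hloc (n : β) := closure_invariant (lp.indicatorCLM (s ⁻¹' {n})).continuous
    fun d => indicatorCLM_mem_synthesisKernel (D n) _ (hD n)
  rcases K.eq_bot_or_eq_top_of_shift_invariant hshift hs hloc with hK | hK
  · exact eq_bot_iff.2 (hK ▸ Submodule.le_topologicalClosure _)
  · exact absurd hK hF.topologicalClosure_synthesisKernel_ne_top

theorem stmt16_general (g : Lp ℂ 2 (volume : Measure ℝ)) (a b : ℝ)
    (G : ℤ × ℤ → Lp ℂ 2 (volume : Measure ℝ))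
    (hG : ∀ m n : ℤ, (G (m, n) : ℝ → ℂ) =ᵐ[volume]
      fun x : ℝ => Complex.exp (2 * (Real.pi : ℂ) * Complex.I * (m : ℂ) * (b : ℂ) * (x : ℂ)) *
        (g : ℝ → ℂ) (x - (n : ℝ) * a))
    (hframe : ∃ A B : ℝ, IsFrame G A B)
    (hover : ∃ c : lp (fun _ : ℤ × ℤ => ℂ) 2, c ≠ 0 ∧
      HasSum (fun p : ℤ × ℤ => c p • G p) 0)
    (c₀ : ℝ)
    (hsupp : ∀ᵐ x : ℝ, x ∉ Set.Icc c₀ (c₀ + a) → (g : ℝ → ℂ) x = 0) :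
    ∀ (σ : ℤ ≃ ℤ × ℤ) (T : Lp ℂ 2 (volume : Measure ℝ) ≃L[ℂ] Lp ℂ 2 (volume : Measure ℝ)),
      ¬ (∀ n : ℤ, G (σ n) = (T ^ n) (G (σ 0))) := by
  intro σ T hT
  obtain ⟨A, B, hframe⟩ := hframe
  obtain ⟨c, hc0, hc⟩ := hover
  have hGsupp (p : ℤ × ℤ) :
      ∀ᵐ x, x ∉ Set.Ioo (c₀ + p.2 • a) (c₀ + (p.2 + 1) • a) → G p x = 0 := by
    filter_upwards [hG p.1 p.2, ae_mul_translate_eq_zero_of_notMem_Ioo hsupp _ p.2] with x h1 h2 hx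
    rw [h1, h2 hx]
  have hs : (Set.range fun k => (σ k).2).Infinite := by
    rw [Set.range_eq_univ.2 fun n => ⟨σ.symm (0, n), by simp⟩]
    exact Set.infinite_univ
  have : Nontrivial (Lp ℂ 2 (volume : Measure ℝ)) :=
    Lp.nontrivial_of_measure_ne_zero two_ne_zero (measurableSet_Icc (a := (0 : ℝ)) (b := 1))
      (by simp) (by simp)
  have hker := (hframe.comp_equiv σ).synthesisKernel_eq_bot_of_orbit_of_localized T hT hs
    (fun n => Lp.indicatorCLM ℂ measurableSet_Ioo measure_Ioo_lt_top.ne)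
    (Lp.indicatorCLM_apply_eq_indicator_of_pairwise_disjoint (fun _ => measurableSet_Ioo)
      (fun _ => measure_Ioo_lt_top.ne) (Set.pairwise_disjoint_Ioo_add_zsmul c₀ a)
      fun k => hGsupp (σ k))
  have hcσ := (reindex_mem_synthesisKernel_comp_iff σ).2 hc
  rw [hker, Submodule.mem_bot, LinearIsometryEquiv.map_eq_zero_iff] at hcσ
  exact hc0 hcσ

theorem stmt16 (g : Lp ℂ 2 (volume : Measure ℝ)) (a b : ℝ) (ha : 0 < a) (hb : 0 < b)
    (G : ℤ × ℤ → Lp ℂ 2 (volume : Measure ℝ))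
    (hG : ∀ m n : ℤ, (G (m, n) : ℝ → ℂ) =ᵐ[volume]
      fun x : ℝ => Complex.exp (2 * (Real.pi : ℂ) * Complex.I * (m : ℂ) * (b : ℂ) * (x : ℂ)) *
        (g : ℝ → ℂ) (x - (n : ℝ) * a))
    (hframe : ∃ A B : ℝ, IsFrame G A B)
    (hover : ∃ c : lp (fun _ : ℤ × ℤ => ℂ) 2, c ≠ 0 ∧
      HasSum (fun p : ℤ × ℤ => c p • G p) 0)
    (c₀ : ℝ)
    (hsupp : ∀ᵐ x : ℝ, x ∉ Set.Icc c₀ (c₀ + a) → (g : ℝ → ℂ) x = 0) :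
    ∀ (σ : ℤ ≃ ℤ × ℤ) (T : Lp ℂ 2 (volume : Measure ℝ) ≃L[ℂ] Lp ℂ 2 (volume : Measure ℝ)),
      ¬ (∀ n : ℤ, G (σ n) = (T ^ n) (G (σ 0))) :=
  stmt16_general g a b G hG hframe hover c₀ hsupp
end
end

section
/- Let N be a positive integer, b = 1/N, and let g ∈ L²(0,1) be such that for some constants 0 < m ≤ M one has m ≤ |g(x)| ≤ M for almost every x ∈ (0,1). For k ∈ ℤ let g_k ∈ L²(0,1) be the element with representative x ↦ exp(2πi·k·b·x)·g(x). Then (g_k)_{k∈ℤ} is a frame of L²(0,1), i.e. there exist A, B > 0 with A‖f‖² ≤ ∑_{k∈ℤ} |⟨f, g_k⟩|² ≤ B‖f‖² for all f ∈ L²(0,1); moreover g_k = E₁ᵏ g for all k ∈ ℤ, where E₁ is the unitary operator on L²(0,1) given by (E₁ f)(x) = exp(2πi·b·x)·f(x). -/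
/-!
Write `⟪f, g_k⟫ = ∫₀¹ e^{2πikx/N} φ(x) dx` with `φ = conj f · g ∈ L²`. Splitting `k = qN + r` with
`0 ≤ r < N`, the coefficients in the class of `r` are the Fourier coefficients of the modulated
function `e^{2πirx/N} φ`, so by Parseval each class contributes `‖φ‖²`, and altogether
`∑ₖ |⟪f, g_k⟫|² = N ‖f g‖²`, which lies between `N m² ‖f‖²` and `N M² ‖f‖²`.
The identity `g_k = E₁ᵏ g` holds because `E₁ᵏ` is multiplication by `e^{2πikbx}`.
-/

noncomputable section

open MeasureTheory
open scoped InnerProductSpace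

open Complex Set ComplexConjugate
open scoped Real

theorem hasSum_prod_of_hasSum_fiberwise {α β γ : Type*} [AddCommMonoid α] [TopologicalSpace α]
    [ContinuousAdd α] [Fintype β] {f : γ × β → α} {a : β → α}
    (h : ∀ b, HasSum (fun c => f (c, b)) (a b)) : HasSum f (∑ b, a b) := by
  classical
  have hfiber : ∀ b, HasSum (fun p : γ × β => if p.2 = b then f p else 0) (a b) := fun b => by
    rw [← (Prod.mk_left_injective b).hasSum_iff]
    · simpa [Function.comp_def] using h b
    · rintro ⟨c, b'⟩ hp
      simp only [Set.mem_range, not_exists] at hp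
      rw [if_neg]
      rintro rfl
      exact hp c rfl
  simpa using hasSum_sum (s := Finset.univ) fun b _ => hfiber b

theorem Int.hasSum_of_hasSum_residueClasses {α : Type*} [AddCommMonoid α] [TopologicalSpace α]
    [ContinuousAdd α] {N : ℕ} [NeZero N] {F : ℤ → α} {a : Fin N → α}
    (h : ∀ r : Fin N, HasSum (fun q : ℤ => F (q * N + r)) (a r)) : HasSum F (∑ r, a r) :=
  (Int.divModEquiv N).symm.hasSum_iff.1
    (hasSum_prod_of_hasSum_fiberwise (f := fun p : ℤ × Fin N => F (p.1 * N + p.2)) h)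

section Lp

variable {α : Type*} [MeasurableSpace α] {μ : Measure α}

theorem Lp.coeFn_zpow_apply_of_coeFn_apply_eq_exp_mul {p : ENNReal} [Fact (1 ≤ p)]
    (θ : α → ℂ) (E : Lp ℂ p μ ≃ₗᵢ[ℂ] Lp ℂ p μ)
    (hE : ∀ f : Lp ℂ p μ, (E f : α → ℂ) =ᵐ[μ] fun x => exp (θ x) * f x) (k : ℤ) (f : Lp ℂ p μ) :
    ((E ^ k) f : α → ℂ) =ᵐ[μ] fun x => exp (k * θ x) * f x := by
  have hE_symm : ∀ f : Lp ℂ p μ, (E.symm f : α → ℂ) =ᵐ[μ] fun x => exp (-θ x) * f x := fun f => by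
    filter_upwards [hE (E.symm f)] with x hx
    rw [E.apply_symm_apply] at hx
    rw [hx, ← mul_assoc, ← Complex.exp_add, neg_add_cancel, Complex.exp_zero, one_mul]
  induction k using Int.induction_on generalizing f with
  | zero => simp
  | succ k ih =>
    filter_upwards [ih (E f), hE f] with x hx hEx
    rw [zpow_add_one, LinearIsometryEquiv.coe_mul, Function.comp_apply, hx, hEx, ← mul_assoc,
      ← Complex.exp_add]
    push_cast
    ring_nf
  | pred k ih =>
    filter_upwards [ih (E.symm f), hE_symm f] with x hx hEx
    rw [zpow_sub_one, LinearIsometryEquiv.coe_mul, LinearIsometryEquiv.coe_inv,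
      Function.comp_apply, hx, hEx, ← mul_assoc, ← Complex.exp_add]
    push_cast
    ring_nf

variable {𝕜 : Type*} [RCLike 𝕜]

theorem L2.sq_norm_eq_integral_sq_norm (f : Lp 𝕜 2 μ) : ‖f‖ ^ 2 = ∫ x, ‖f x‖ ^ 2 ∂μ := by
  have h := L2.inner_def (𝕜 := 𝕜) f f
  simp only [inner_self_eq_norm_sq_to_K, ← RCLike.ofReal_pow, integral_ofReal] at h
  exact_mod_cast h

theorem L2.inner_eq_integral_mul_conj_mul {f g g' : Lp 𝕜 2 μ} {u : α → 𝕜}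
    (hg' : (g' : α → 𝕜) =ᵐ[μ] fun x => u x * g x) :
    ⟪f, g'⟫_𝕜 = ∫ x, u x * (conj (f x) * g x) ∂μ := by
  rw [L2.inner_def]
  refine integral_congr_ae ?_
  filter_upwards [hg'] with x hx
  rw [RCLike.inner_apply, hx]
  ring

variable {f : Lp 𝕜 2 μ} {g : α → 𝕜}

theorem L2.memLp_conj_mul_of_ae_norm_le {M : ℝ} (hg_meas : AEStronglyMeasurable g μ)
    (hg : ∀ᵐ x ∂μ, ‖g x‖ ≤ M) : MemLp (fun x => conj (f x) * g x) 2 μ :=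
  (memLp_top_of_bound hg_meas M hg).mul' (Lp.memLp f).star

theorem L2.integral_sq_norm_conj_mul_bounds {m M : ℝ} (hm : 0 ≤ m)
    (hg_meas : AEStronglyMeasurable g μ) (hg : ∀ᵐ x ∂μ, m ≤ ‖g x‖ ∧ ‖g x‖ ≤ M) :
    m ^ 2 * ‖f‖ ^ 2 ≤ ∫ x, ‖conj (f x) * g x‖ ^ 2 ∂μ ∧
      ∫ x, ‖conj (f x) * g x‖ ^ 2 ∂μ ≤ M ^ 2 * ‖f‖ ^ 2 := by
  have hf_int : Integrable (fun x => ‖f x‖ ^ 2) μ :=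
    (memLp_two_iff_integrable_sq_norm (Lp.aestronglyMeasurable f)).1 (Lp.memLp f)
  have hfg : MemLp (fun x => conj (f x) * g x) 2 μ :=
    L2.memLp_conj_mul_of_ae_norm_le hg_meas (hg.mono fun _ hx => hx.2)
  have hfg_int := (memLp_two_iff_integrable_sq_norm hfg.1).1 hfg
  have hnorm : ∀ x, ‖conj (f x) * g x‖ ^ 2 = ‖g x‖ ^ 2 * ‖f x‖ ^ 2 := fun x => by
    rw [norm_mul, RCLike.norm_conj, mul_pow, mul_comm]
  rw [L2.sq_norm_eq_integral_sq_norm, ← integral_const_mul, ← integral_const_mul]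
  constructor
  · refine integral_mono_ae (hf_int.const_mul _) hfg_int ?_
    filter_upwards [hg] with x hx
    rw [hnorm]
    gcongr
    exact hx.1
  · refine integral_mono_ae hfg_int (hf_int.const_mul _) ?_
    filter_upwards [hg] with x hx
    rw [hnorm]
    gcongr
    exact hx.2

end Lp

theorem hasSum_sq_norm_integral_Ioo_exp_mul {h : ℝ → ℂ}
    (hh : MemLp h 2 (volume.restrict (Ioo (0:ℝ) 1))) :
    HasSum (fun n : ℤ => ‖∫ x in Ioo (0:ℝ) 1, exp (2 * π * I * n * x) * h x‖ ^ 2)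
      (∫ x in Ioo (0:ℝ) 1, ‖h x‖ ^ 2) := by
  rw [restrict_Ioo_eq_restrict_Ioc] at hh ⊢
  have parseval := hasSum_sq_fourierCoeffOn zero_lt_one hh
  simp only [fourierCoeffOn_eq_integral, intervalIntegral.integral_of_le zero_le_one,
    fourier_coe_apply, sub_zero, inv_one, div_one, ofReal_one, one_smul, one_mul,
    smul_eq_mul] at parseval
  exact (Equiv.neg ℤ).hasSum_iff.1 parseval

theorem hasSum_sq_norm_integral_Ioo_exp_div_mul {N : ℕ} [NeZero N] {h : ℝ → ℂ}
    (hh : MemLp h 2 (volume.restrict (Ioo (0:ℝ) 1))) :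
    HasSum (fun k : ℤ => ‖∫ x in Ioo (0:ℝ) 1, exp (2 * π * I * k * x / N) * h x‖ ^ 2)
      (N * ∫ x in Ioo (0:ℝ) 1, ‖h x‖ ^ 2) := by
  have hN : (N : ℂ) ≠ 0 := Nat.cast_ne_zero.2 (NeZero.ne N)
  have hfiber : ∀ r : Fin N, HasSum (fun q : ℤ =>
      ‖∫ x in Ioo (0:ℝ) 1, exp (2 * π * I * (q * N + r : ℤ) * x / N) * h x‖ ^ 2)
      (∫ x in Ioo (0:ℝ) 1, ‖h x‖ ^ 2) := fun r => by
    have hmod : MemLp (fun x : ℝ => exp (2 * π * I * r * x / N) * h x) 2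
        (volume.restrict (Ioo (0:ℝ) 1)) :=
      hh.of_le ((by fun_prop : Continuous _).aestronglyMeasurable.mul hh.1)
        (ae_of_all _ fun x => by simp [Complex.norm_exp])
    convert hasSum_sq_norm_integral_Ioo_exp_mul hmod using 1
    · ext q
      congr 3
      ext x
      rw [← mul_assoc, ← Complex.exp_add]
      congr 2
      push_cast
      field_simp
    · simp [Complex.norm_exp]
  have key := Int.hasSum_of_hasSum_residueClasses
    (F := fun k : ℤ => ‖∫ x in Ioo (0:ℝ) 1, exp (2 * π * I * k * x / N) * h x‖ ^ 2) hfiber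
  rwa [Finset.sum_const, Finset.card_univ, Fintype.card_fin, nsmul_eq_mul] at key

theorem stmt19 (N : ℕ) (hN : 0 < N) (b : ℝ) (hb : b = 1 / (N : ℝ))
    (g : Lp ℂ 2 (volume.restrict (Set.Ioo (0:ℝ) 1)))
    (m M : ℝ) (hm : 0 < m) (hM : 0 < M)
    (hg : ∀ᵐ x ∂(volume.restrict (Set.Ioo (0:ℝ) 1)),
      m ≤ ‖(g : ℝ → ℂ) x‖ ∧ ‖(g : ℝ → ℂ) x‖ ≤ M)
    (gk : ℤ → Lp ℂ 2 (volume.restrict (Set.Ioo (0:ℝ) 1)))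
    (hgk : ∀ k : ℤ, (gk k : ℝ → ℂ) =ᵐ[volume.restrict (Set.Ioo (0:ℝ) 1)]
      fun x : ℝ => Complex.exp (2 * (Real.pi : ℂ) * Complex.I * (k : ℂ) * (b : ℂ) * (x : ℂ)) *
        (g : ℝ → ℂ) x)
    (E₁ : Lp ℂ 2 (volume.restrict (Set.Ioo (0:ℝ) 1)) ≃ₗᵢ[ℂ]
      Lp ℂ 2 (volume.restrict (Set.Ioo (0:ℝ) 1)))
    (hE₁ : ∀ f : Lp ℂ 2 (volume.restrict (Set.Ioo (0:ℝ) 1)),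
      (E₁ f : ℝ → ℂ) =ᵐ[volume.restrict (Set.Ioo (0:ℝ) 1)]
        fun x : ℝ => Complex.exp (2 * (Real.pi : ℂ) * Complex.I * (b : ℂ) * (x : ℂ)) *
          (f : ℝ → ℂ) x) :
    (∃ A B : ℝ, IsFrame gk A B) ∧ ∀ k : ℤ, gk k = (E₁ ^ k) g := by
  have : NeZero N := ⟨hN.ne'⟩
  refine ⟨⟨N * m ^ 2, N * M ^ 2, by positivity, by positivity, fun f => ?_⟩, fun k => ?_⟩
  · have hinner : ∀ k : ℤ, ⟪f, gk k⟫_ℂ =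
        ∫ x in Ioo (0:ℝ) 1, exp (2 * π * I * k * x / N) * (conj (f x) * g x) := fun k => by
      rw [L2.inner_eq_integral_mul_conj_mul (hgk k), hb]
      push_cast
      ring_nf
    have hsum : HasSum (fun k : ℤ => ‖⟪f, gk k⟫_ℂ‖ ^ 2)
        (N * ∫ x in Ioo (0:ℝ) 1, ‖conj (f x) * g x‖ ^ 2) := by
      simp only [hinner]
      exact hasSum_sq_norm_integral_Ioo_exp_div_mul
        (L2.memLp_conj_mul_of_ae_norm_le (Lp.aestronglyMeasurable g) (hg.mono fun _ hx => hx.2))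
    obtain ⟨hlower, hupper⟩ :=
      L2.integral_sq_norm_conj_mul_bounds (f := f) hm.le (Lp.aestronglyMeasurable g) hg
    refine ⟨hsum.summable, ?_, ?_⟩ <;> rw [hsum.tsum_eq, mul_assoc] <;> gcongr
  · refine Lp.ext ((hgk k).trans ?_)
    filter_upwards [Lp.coeFn_zpow_apply_of_coeFn_apply_eq_exp_mul _ E₁ hE₁ k g] with x hx
    rw [hx]
    ring_nf
end
end
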